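/- arXiv:1212.0875 — 5 statements merged into one kernel-verified Lean document; each statement's English description precedes it below -/
import Mathlib

section
/- Let X = {x ∈ ℝ₊^K : A x = ρ} be a nonempty compact polytope (A a matrix with nonnegative integer entries, ρ a positive vector), let u* = min_{x∈X} Σ_k x_k, and let X* = {x ∈ X : Σ_k x_k = u*}. Then there exists a constant D ≥ 1 such that for every x ∈ X, D·(Σ_k x_k - u*) ≥ d(x, X*), where d denotes the ℓ¹ distance from a point to a set. -/
open Finset

/-- There exists `D ≥ 1` such that for every feasible point `x` of the LP,
`D (Σ_k x_k - u*) ≥ d₁(x, X*)`, where `X*` is the optimal set and `u*` the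
optimal value. -/
theorem stmt4 {I K : Type*} [Fintype I] [Fintype K]
    (A : I → K → ℕ) (ρ : I → ℝ) (hρ : ∀ i, 0 < ρ i)
    (X : Set (K → ℝ))
    (hX : X = {x : K → ℝ | (∀ k, 0 ≤ x k) ∧ ∀ i, ∑ k, (A i k : ℝ) * x k = ρ i})
    (hne : X.Nonempty) (hcomp : IsCompact X)
    (ustar : ℝ) (hu : IsLeast ((fun x : K → ℝ => ∑ k, x k) '' X) ustar)
    (Xstar : Set (K → ℝ))
    (hXs : Xstar = {x ∈ X | ∑ k, x k = ustar}) :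
    ∃ D : ℝ, 1 ≤ D ∧ ∀ x ∈ X,
      sInf ((fun s : K → ℝ => ∑ k, |x k - s k|) '' Xstar)
        ≤ D * (∑ k, x k - ustar) := by
  classical
  -- basic facts about X
  have hXnn : ∀ x ∈ X, ∀ k, 0 ≤ x k := by
    intro x hx; rw [hX] at hx; exact hx.1
  have hXc : ∀ x ∈ X, ∀ i, ∑ k, (A i k : ℝ) * x k = ρ i := by
    intro x hx; rw [hX] at hx; exact hx.2
  have hXmem : ∀ x : K → ℝ, (∀ k, 0 ≤ x k) → (∀ i, ∑ k, (A i k : ℝ) * x k = ρ i) → x ∈ X := by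
    intro x h1 h2; rw [hX]; exact ⟨h1, h2⟩
  have hXconv : Convex ℝ X := by
    intro x hx y hy a b ha hb hab
    refine hXmem _ (fun k => ?_) (fun i => ?_)
    · have h1 := hXnn x hx k; have h2 := hXnn y hy k
      simp only [Pi.add_apply, Pi.smul_apply, smul_eq_mul]
      positivity
    · have hx' := hXc x hx i; have hy' := hXc y hy i
      have heq : ∑ k, (A i k : ℝ) * (a * x k + b * y k)
          = a * ∑ k, (A i k : ℝ) * x k + b * ∑ k, (A i k : ℝ) * y k := by
        rw [Finset.mul_sum, Finset.mul_sum, ← Finset.sum_add_distrib]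
        exact Finset.sum_congr rfl fun k _ => by ring
      simp only [Pi.add_apply, Pi.smul_apply, smul_eq_mul]
      rw [heq, hx', hy', ← add_mul, hab, one_mul]
  have hlb : ∀ x ∈ X, ustar ≤ ∑ k, x k := fun x hx => hu.2 ⟨x, hx, rfl⟩
  -- extreme points are finite: the support map is injective on them
  set E := X.extremePoints ℝ with hE
  have hEX : E ⊆ X := extremePoints_subset
  have hinj : Set.InjOn (fun x : K → ℝ => {k | x k ≠ 0}) E := by
    intro x hx y hy hsupp
    by_contra hxy
    have hxX := hx.1
    have hyX := hy.1
    simp only [Set.ext_iff, Set.mem_setOf_eq] at hsupp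
    have hc : ∀ k : K, 0 < (if y k - x k = 0 then 1 else x k / |y k - x k|) := by
      intro k
      split_ifs with h
      · norm_num
      · have hxk : x k ≠ 0 := by
          intro h0
          have hyk : y k = 0 := by
            by_contra hyk
            exact (hsupp k).mpr hyk h0
          exact h (by rw [hyk, h0]; ring)
        have hxpos : 0 < x k := lt_of_le_of_ne (hXnn x hxX k) (Ne.symm hxk)
        exact div_pos hxpos (abs_pos.mpr h)
    obtain ⟨ε, hε, hεle⟩ : ∃ ε > 0, ∀ k, ε * |y k - x k| ≤ x k := by
      by_cases hK : Nonempty K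
      · set c : K → ℝ := fun k => if y k - x k = 0 then 1 else x k / |y k - x k| with hcdef
        have hUn : (Finset.univ : Finset K).Nonempty := Finset.univ_nonempty
        refine ⟨Finset.univ.inf' hUn c, ?_, ?_⟩
        · exact (Finset.lt_inf'_iff _).2 fun k _ => hc k
        · intro k
          have hle : Finset.univ.inf' hUn c ≤ c k := Finset.inf'_le _ (Finset.mem_univ k)
          by_cases h : y k - x k = 0
          · rw [h, abs_zero, mul_zero]; exact hXnn x hxX k
          · have hck : c k * |y k - x k| = x k := by
              simp only [hcdef, if_neg h]
              exact div_mul_cancel₀ _ (abs_ne_zero.mpr h)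
            calc Finset.univ.inf' hUn c * |y k - x k| ≤ c k * |y k - x k| :=
                  mul_le_mul_of_nonneg_right hle (abs_nonneg _)
              _ = x k := hck
      · exact ⟨1, one_pos, fun k => absurd ⟨k⟩ hK⟩
    set p : K → ℝ := fun k => x k + ε * (y k - x k) with hpdef
    set q : K → ℝ := fun k => x k - ε * (y k - x k) with hqdef
    have hAd : ∀ i, ∑ k, (A i k : ℝ) * (y k - x k) = 0 := by
      intro i
      have heq : ∑ k, (A i k : ℝ) * (y k - x k)
          = (∑ k, (A i k : ℝ) * y k) - ∑ k, (A i k : ℝ) * x k := by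
        rw [← Finset.sum_sub_distrib]; exact Finset.sum_congr rfl fun k _ => by ring
      rw [heq, hXc y hyX i, hXc x hxX i, sub_self]
    have hpX : p ∈ X := by
      refine hXmem _ (fun k => ?_) (fun i => ?_)
      · have h1 : -(ε * |y k - x k|) ≤ ε * (y k - x k) := by
          have := neg_abs_le (y k - x k)
          nlinarith [abs_nonneg (y k - x k)]
        have := hεle k
        simp only [hpdef]; linarith
      · have heq : ∑ k, (A i k : ℝ) * (x k + ε * (y k - x k))
            = (∑ k, (A i k : ℝ) * x k) + ε * ∑ k, (A i k : ℝ) * (y k - x k) := by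
          rw [Finset.mul_sum, ← Finset.sum_add_distrib]
          exact Finset.sum_congr rfl fun k _ => by ring
        simp only [hpdef]
        rw [heq, hXc x hxX i, hAd i, mul_zero, add_zero]
    have hqX : q ∈ X := by
      refine hXmem _ (fun k => ?_) (fun i => ?_)
      · have h1 : ε * (y k - x k) ≤ ε * |y k - x k| := by
          have := le_abs_self (y k - x k)
          nlinarith [abs_nonneg (y k - x k)]
        have := hεle k
        simp only [hqdef]; linarith
      · have heq : ∑ k, (A i k : ℝ) * (x k - ε * (y k - x k))
            = (∑ k, (A i k : ℝ) * x k) - ε * ∑ k, (A i k : ℝ) * (y k - x k) := by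
          rw [Finset.mul_sum, ← Finset.sum_sub_distrib]
          exact Finset.sum_congr rfl fun k _ => by ring
        simp only [hqdef]
        rw [heq, hXc x hxX i, hAd i, mul_zero, sub_zero]
    have hseg : x ∈ openSegment ℝ p q := by
      refine ⟨1/2, 1/2, by norm_num, by norm_num, by norm_num, ?_⟩
      funext k
      simp only [hpdef, hqdef, Pi.add_apply, Pi.smul_apply, smul_eq_mul]
      ring
    have hpx := hx.2 hpX hqX hseg
    apply hxy
    funext k
    have hk := congrFun hpx k
    simp only [hpdef] at hk
    have h0 : ε * (y k - x k) = 0 := by linarith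
    have h1 : y k - x k = 0 := by
      rcases mul_eq_zero.mp h0 with h | h
      · exact absurd h (ne_of_gt hε)
      · exact h
    linarith
  have hEfin : E.Finite := Set.Finite.of_finite_image (Set.toFinite _) hinj
  -- X is the convex hull of its extreme points
  have hKM : closure (convexHull ℝ E) = X := closure_convexHull_extremePoints hcomp hXconv
  have hXeq : convexHull ℝ E = X := by
    rw [← hKM, (hEfin.isClosed_convexHull (𝕜 := ℝ)).closure_eq]
  set Efin : Finset (K → ℝ) := hEfin.toFinset with hEfindef
  have hcoe : (Efin : Set (K → ℝ)) = E := hEfin.coe_toFinset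
  have hXeq' : convexHull ℝ (Efin : Set (K → ℝ)) = X := by rw [hcoe, hXeq]
  have hmemE : ∀ v ∈ Efin, v ∈ X := by
    intro v hv; exact hEX (hEfin.mem_toFinset.mp hv)
  -- representation of points of X as convex combinations
  have hrep : ∀ x ∈ X, ∃ w : (K → ℝ) → ℝ, (∀ v ∈ Efin, 0 ≤ w v) ∧ (∑ v ∈ Efin, w v = 1) ∧
      ∀ k, x k = ∑ v ∈ Efin, w v * v k := by
    intro x hx
    have hx' : x ∈ convexHull ℝ (Efin : Set (K → ℝ)) := hXeq' ▸ hx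
    rw [Finset.convexHull_eq] at hx'
    obtain ⟨w, hw0, hw1, hwx⟩ := hx'
    refine ⟨w, hw0, hw1, fun k => ?_⟩
    rw [← hwx, Finset.centerMass_eq_of_sum_1 _ _ hw1, Finset.sum_apply]
    exact Finset.sum_congr rfl fun v _ => by simp
  -- sum over coordinates of a convex combination
  have hsum_rep : ∀ (S : Finset (K → ℝ)) (w : (K → ℝ) → ℝ),
      ∑ k, (∑ v ∈ S, w v * v k) = ∑ v ∈ S, w v * ∑ k, v k := by
    intro S w
    rw [Finset.sum_comm]
    exact Finset.sum_congr rfl fun v _ => by rw [Finset.mul_sum]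
  -- swapping sums against the constraint matrix
  have hswap : ∀ (i : I) (S : Finset (K → ℝ)) (w : (K → ℝ) → ℝ),
      ∑ k, (A i k : ℝ) * (∑ v ∈ S, w v * v k) = ∑ v ∈ S, w v * ∑ k, (A i k : ℝ) * v k := by
    intro i S w
    calc ∑ k, (A i k : ℝ) * (∑ v ∈ S, w v * v k)
        = ∑ k, ∑ v ∈ S, (A i k : ℝ) * (w v * v k) :=
          Finset.sum_congr rfl fun k _ => Finset.mul_sum _ _ _
      _ = ∑ v ∈ S, ∑ k, (A i k : ℝ) * (w v * v k) := Finset.sum_comm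
      _ = ∑ v ∈ S, w v * ∑ k, (A i k : ℝ) * v k := by
          refine Finset.sum_congr rfl fun v _ => ?_
          rw [Finset.mul_sum]
          exact Finset.sum_congr rfl fun k _ => by ring
  -- there is an optimal extreme point
  obtain ⟨x0, hx0X, hx0s⟩ := hu.1
  obtain ⟨w0, hw00, hw01, hw0x⟩ := hrep x0 hx0X
  have hterm : ∀ v ∈ Efin, w0 v * (∑ k, v k - ustar) = 0 := by
    have hsum0 : ∑ v ∈ Efin, w0 v * (∑ k, v k - ustar) = 0 := by
      have heq : ∑ v ∈ Efin, w0 v * (∑ k, v k - ustar)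
          = (∑ v ∈ Efin, w0 v * ∑ k, v k) - (∑ v ∈ Efin, w0 v) * ustar := by
        rw [Finset.sum_mul, ← Finset.sum_sub_distrib]
        exact Finset.sum_congr rfl fun v _ => by ring
      have hx0sum : ∑ k, x0 k = ∑ v ∈ Efin, w0 v * ∑ k, v k := by
        rw [← hsum_rep Efin w0]
        exact Finset.sum_congr rfl fun k _ => hw0x k
      have hx0s' : ∑ k, x0 k = ustar := hx0s
      rw [heq, ← hx0sum, hx0s', hw01, one_mul, sub_self]
    have hnn : ∀ v ∈ Efin, 0 ≤ w0 v * (∑ k, v k - ustar) := fun v hv =>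
      mul_nonneg (hw00 v hv) (sub_nonneg.mpr (hlb v (hmemE v hv)))
    exact (Finset.sum_eq_zero_iff_of_nonneg hnn).mp hsum0
  obtain ⟨v0, hv0mem, hv0w⟩ : ∃ v ∈ Efin, w0 v ≠ 0 := by
    by_contra h
    push_neg at h
    have h0 : ∑ v ∈ Efin, w0 v = 0 := Finset.sum_eq_zero h
    rw [hw01] at h0; norm_num at h0
  have hv0opt : ∑ k, v0 k = ustar := by
    have h0 := hterm v0 hv0mem
    rcases mul_eq_zero.mp h0 with h | h
    · exact absurd h hv0w
    · linarith
  have hne' : Efin.Nonempty := ⟨v0, hv0mem⟩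
  -- constants
  set M : ℝ := Efin.sup' hne' (fun v => ∑ k, v k) with hMdef
  have hM : ∀ v ∈ Efin, ∑ k, v k ≤ M := fun v hv => Finset.le_sup' _ hv
  have hM0 : 0 ≤ M := by
    refine le_trans ?_ (hM v0 hv0mem)
    exact Finset.sum_nonneg fun k _ => hXnn v0 (hmemE v0 hv0mem) k
  set V1 : Finset (K → ℝ) := Efin.filter (fun v => ¬ (∑ k, v k = ustar)) with hV1def
  set V0 : Finset (K → ℝ) := Efin.filter (fun v => ∑ k, v k = ustar) with hV0def
  set δ : ℝ := if h : V1.Nonempty then V1.inf' h (fun v => ∑ k, v k - ustar) else 1 with hδdef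
  have hδpos : 0 < δ := by
    rw [hδdef]
    split_ifs with h
    · refine (Finset.lt_inf'_iff _).2 fun v hv => ?_
      rw [hV1def, Finset.mem_filter] at hv
      cases lt_or_eq_of_le (hlb v (hmemE v hv.1)) with
      | inl h' => linarith
      | inr h' => exact absurd h'.symm hv.2
    · norm_num
  have hδle : ∀ v ∈ V1, δ ≤ ∑ k, v k - ustar := by
    intro v hv
    rw [hδdef, dif_pos ⟨v, hv⟩]
    exact Finset.inf'_le _ hv
  refine ⟨max 1 (2 * M / δ), le_max_left _ _, fun x hxX => ?_⟩
  obtain ⟨w, hw0, hw1, hwx⟩ := hrep x hxX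
  set μ : ℝ := ∑ v ∈ V1, w v with hμdef
  have hμ0 : 0 ≤ μ := Finset.sum_nonneg fun v hv =>
    hw0 v (Finset.mem_filter.mp hv).1
  have hsplit : (∑ v ∈ V0, w v) + μ = 1 := by
    rw [hμdef, hV0def, hV1def, Finset.sum_filter_add_sum_filter_not, hw1]
  have hxsplit : ∀ k, x k = (∑ v ∈ V0, w v * v k) + ∑ v ∈ V1, w v * v k := by
    intro k
    rw [hwx k, hV0def, hV1def, Finset.sum_filter_add_sum_filter_not]
  have hV0X : ∀ v ∈ V0, v ∈ X := fun v hv => hmemE v (Finset.mem_filter.mp hv).1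
  have hV1X : ∀ v ∈ V1, v ∈ X := fun v hv => hmemE v (Finset.mem_filter.mp hv).1
  have hV0opt : ∀ v ∈ V0, ∑ k, v k = ustar := fun v hv => (Finset.mem_filter.mp hv).2
  -- the projected point y
  set y : K → ℝ := fun k => (∑ v ∈ V0, w v * v k) + μ * v0 k with hydef
  have hyX : y ∈ X := by
    refine hXmem _ (fun k => ?_) (fun i => ?_)
    · exact add_nonneg (Finset.sum_nonneg fun v hv => mul_nonneg
        (hw0 v (Finset.mem_filter.mp hv).1) (hXnn v (hV0X v hv) k))
        (mul_nonneg hμ0 (hXnn v0 (hmemE v0 hv0mem) k))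
    · have heq : ∑ k, (A i k : ℝ) * ((∑ v ∈ V0, w v * v k) + μ * v0 k)
          = (∑ k, (A i k : ℝ) * (∑ v ∈ V0, w v * v k)) + μ * ∑ k, (A i k : ℝ) * v0 k := by
        rw [Finset.mul_sum, ← Finset.sum_add_distrib]
        exact Finset.sum_congr rfl fun k _ => by ring
      simp only [hydef]
      rw [heq, hswap i V0 w, hXc v0 (hmemE v0 hv0mem) i]
      have hrw : ∑ v ∈ V0, w v * ∑ k, (A i k : ℝ) * v k = ∑ v ∈ V0, w v * ρ i :=
        Finset.sum_congr rfl fun v hv => by rw [hXc v (hV0X v hv) i]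
      rw [hrw, ← Finset.sum_mul, ← add_mul, hsplit, one_mul]
  have hysum : ∑ k, y k = ustar := by
    have heq : ∑ k, y k = (∑ v ∈ V0, w v * ∑ k, v k) + μ * ∑ k, v0 k := by
      simp only [hydef]
      rw [Finset.sum_add_distrib, hsum_rep V0 w, ← Finset.mul_sum]
    rw [heq, hv0opt]
    have hrw : ∑ v ∈ V0, w v * ∑ k, v k = ∑ v ∈ V0, w v * ustar :=
      Finset.sum_congr rfl fun v hv => by rw [hV0opt v hv]
    rw [hrw, ← Finset.sum_mul, ← add_mul, hsplit, one_mul]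
  have hyXs : y ∈ Xstar := by rw [hXs]; exact ⟨hyX, hysum⟩
  -- distance bound
  have hdist : ∑ k, |x k - y k| ≤ 2 * M * μ := by
    have hterm2 : ∀ k, |x k - y k| ≤ (∑ v ∈ V1, w v * v k) + μ * v0 k := by
      intro k
      have hxy : x k - y k = (∑ v ∈ V1, w v * v k) - μ * v0 k := by
        rw [hxsplit k]; simp only [hydef]; ring
      rw [hxy]
      have ha : 0 ≤ ∑ v ∈ V1, w v * v k := Finset.sum_nonneg fun v hv =>
        mul_nonneg (hw0 v (Finset.mem_filter.mp hv).1) (hXnn v (hV1X v hv) k)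
      have hb : 0 ≤ μ * v0 k := mul_nonneg hμ0 (hXnn v0 (hmemE v0 hv0mem) k)
      rw [abs_sub_le_iff]
      constructor <;> linarith
    calc ∑ k, |x k - y k| ≤ ∑ k, ((∑ v ∈ V1, w v * v k) + μ * v0 k) :=
          Finset.sum_le_sum fun k _ => hterm2 k
      _ = (∑ v ∈ V1, w v * ∑ k, v k) + μ * ∑ k, v0 k := by
          rw [Finset.sum_add_distrib, hsum_rep V1 w, ← Finset.mul_sum]
      _ ≤ (∑ v ∈ V1, w v * M) + μ * M := by
          refine add_le_add (Finset.sum_le_sum fun v hv => ?_)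
            (mul_le_mul_of_nonneg_left (hv0opt ▸ hM v0 hv0mem) hμ0)
          exact mul_le_mul_of_nonneg_left (hM v (Finset.mem_filter.mp hv).1)
            (hw0 v (Finset.mem_filter.mp hv).1)
      _ = 2 * M * μ := by rw [← Finset.sum_mul]; ring
  -- objective bound
  have hobj : δ * μ ≤ ∑ k, x k - ustar := by
    have heq : ∑ k, x k - ustar = ∑ v ∈ V1, w v * (∑ k, v k - ustar) := by
      have h1 : ∑ k, x k = (∑ v ∈ V0, w v * ∑ k, v k) + ∑ v ∈ V1, w v * ∑ k, v k := by
        rw [Finset.sum_congr rfl fun k (_ : k ∈ Finset.univ) => hxsplit k,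
          Finset.sum_add_distrib, hsum_rep V0 w, hsum_rep V1 w]
      have h2 : ∑ v ∈ V0, w v * ∑ k, v k = (∑ v ∈ V0, w v) * ustar := by
        rw [Finset.sum_mul]
        exact Finset.sum_congr rfl fun v hv => by rw [hV0opt v hv]
      have h3 : ∑ v ∈ V1, w v * (∑ k, v k - ustar)
          = (∑ v ∈ V1, w v * ∑ k, v k) - μ * ustar := by
        rw [hμdef, Finset.sum_mul, ← Finset.sum_sub_distrib]
        exact Finset.sum_congr rfl fun v _ => by ring
      rw [h1, h2, h3]
      have h4 : (∑ v ∈ V0, w v) * ustar + μ * ustar = ustar := by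
        rw [← add_mul, hsplit, one_mul]
      linarith
    rw [heq]
    calc δ * μ = ∑ v ∈ V1, w v * δ := by rw [← Finset.sum_mul]; ring
      _ ≤ ∑ v ∈ V1, w v * (∑ k, v k - ustar) := Finset.sum_le_sum fun v hv =>
          mul_le_mul_of_nonneg_left (hδle v hv) (hw0 v (Finset.mem_filter.mp hv).1)
  -- conclude
  have hbdd : BddBelow ((fun s : K → ℝ => ∑ k, |x k - s k|) '' Xstar) := by
    refine ⟨0, fun r hr => ?_⟩
    obtain ⟨s, _, rfl⟩ := hr
    exact Finset.sum_nonneg fun k _ => abs_nonneg _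
  have hsInf : sInf ((fun s : K → ℝ => ∑ k, |x k - s k|) '' Xstar) ≤ ∑ k, |x k - y k| :=
    csInf_le hbdd ⟨y, hyXs, rfl⟩
  have hf0 : 0 ≤ ∑ k, x k - ustar := sub_nonneg.mpr (hlb x hxX)
  have hDge : 2 * M / δ ≤ max 1 (2 * M / δ) := le_max_right _ _
  calc sInf ((fun s : K → ℝ => ∑ k, |x k - s k|) '' Xstar)
      ≤ ∑ k, |x k - y k| := hsInf
    _ ≤ 2 * M * μ := hdist
    _ = (2 * M / δ) * (δ * μ) := by field_simp
    _ ≤ (2 * M / δ) * (∑ k, x k - ustar) :=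
        mul_le_mul_of_nonneg_left hobj (by positivity)
    _ ≤ max 1 (2 * M / δ) * (∑ k, x k - ustar) :=
        mul_le_mul_of_nonneg_right hDge hf0
end

section
/- Let x̃ ∈ (ℝ₊ ∪ {∞})^K where K ⊂ ℤ₊^I \ {0} is a finite monotone set of nonzero configurations containing all unit vectors e_i. Define w̃(x̃) = min(1, x̃) (with w̃(∞) = 1), and for (k,i) with k ∈ K and k - e_i ∈ K̄ = K ∪ {0}, define Δ_{(k,i)}(x̃) = w̃(x̃_k) - w̃(x̃_{k-e_i}). Suppose there is no strictly improving (SI) pair associated with x̃, where an SI pair is a pair {(k,i),(k',i)} with k_i ≥ 1, x̃_k > 0, either k' = e_i or (k'_i > 0 and x̃_{k'-e_i} > 0), and Δ_{(k',i)}(x̃) < Δ_{(k,i)}(x̃). Set η_i = w̃(x̃_{e_i}) for each i. Then for every k ∈ K such that η_i > 0 whenever k_i ≥ 1, we have Σ_{i∈I} k_i η_i = w̃(x̃_k). -/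
open Finset

section SI

variable {I : Type*} [Fintype I] [DecidableEq I]

/-- `w̃(x̃) = min(1, x̃)` with `w̃(∞) = 1`, as a real number. -/
noncomputable def wTilde (x : ENNReal) : ℝ := (min 1 x).toReal

/-- The configuration `k - e_i` (truncated subtraction in each coordinate). -/
def esub (k : I → ℕ) (i : I) : I → ℕ := fun j => k j - (if j = i then 1 else 0)

/-- The standard unit vector `e_i`. -/
def unitVec (i : I) : I → ℕ := fun j => if j = i then 1 else 0

/-- `Δ_{(k,i)}(x̃) = w̃(x̃_k) - w̃(x̃_{k - e_i})`. -/
noncomputable def Delta (xt : (I → ℕ) → ENNReal) (k : I → ℕ) (i : I) : ℝ :=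
  wTilde (xt k) - wTilde (xt (esub k i))

/-- `(k, i)` is an admissible pair: `k` a nonzero configuration in `K̄` with
`k_i ≥ 1` and `k - e_i ∈ K̄`. -/
def MemM (Kbar : Set (I → ℕ)) (k : I → ℕ) (i : I) : Prop :=
  k ∈ Kbar ∧ k ≠ 0 ∧ 1 ≤ k i ∧ esub k i ∈ Kbar

/-- `{(k,i),(k',i)}` is a strictly improving (SI) pair associated with `x̃`. -/
def IsSIPair (Kbar : Set (I → ℕ)) (xt : (I → ℕ) → ENNReal)
    (k k' : I → ℕ) (i : I) : Prop :=
  MemM Kbar k i ∧ MemM Kbar k' i ∧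
  0 < xt k ∧
  (k' = unitVec i ∨ (0 < k' i ∧ 0 < xt (esub k' i))) ∧
  Delta xt k' i < Delta xt k i

lemma wTilde_nonneg' (x : ENNReal) : 0 ≤ wTilde x := ENNReal.toReal_nonneg

lemma pos_of_wTilde_pos' {x : ENNReal} (h : 0 < wTilde x) : 0 < x := by
  rcases eq_or_ne x 0 with rfl | hx
  · simp [wTilde] at h
  · exact pos_iff_ne_zero.mpr hx

omit [Fintype I] in
lemma esub_unitVec' (i : I) : esub (unitVec i) i = 0 := by
  funext j; by_cases h : j = i <;> simp [esub, unitVec, h]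

omit [Fintype I] in
lemma unitVec_ne_zero' (i : I) : unitVec i ≠ 0 := by
  intro h
  have := congrFun h i
  simp [unitVec] at this

omit [Fintype I] in
lemma memM_unit' (Kbar : Set (I → ℕ)) (h0 : (0 : I → ℕ) ∈ Kbar)
    (hunit : ∀ i, unitVec i ∈ Kbar) (i : I) : MemM Kbar (unitVec i) i :=
  ⟨hunit i, unitVec_ne_zero' i, by simp [unitVec], by rw [esub_unitVec']; exact h0⟩

omit [Fintype I] in
lemma delta_unit' (xt : (I → ℕ) → ENNReal) (hx0 : xt 0 = 0) (i : I) :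
    Delta xt (unitVec i) i = wTilde (xt (unitVec i)) := by
  rw [Delta, esub_unitVec', hx0]
  simp [wTilde]

/-- If there is no SI pair associated with `x̃`, and `η_i = w̃(x̃_{e_i})`, then
for every `k ∈ K` such that `k_i ≥ 1` implies `η_i > 0`, we have
`Σ_i k_i η_i = w̃(x̃_k)`. -/
theorem stmt8
    (Kbar : Set (I → ℕ)) (hfin : Kbar.Finite)
    (hmono : ∀ k ∈ Kbar, ∀ k' : I → ℕ, (∀ j, k' j ≤ k j) → k' ∈ Kbar)
    (h0 : (0 : I → ℕ) ∈ Kbar) (hunit : ∀ i, unitVec i ∈ Kbar)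
    (xt : (I → ℕ) → ENNReal) (hx0 : xt 0 = 0)
    (hnoSI : ∀ k k' : I → ℕ, ∀ i : I, ¬ IsSIPair Kbar xt k k' i)
    (η : I → ℝ) (hη : ∀ i, η i = wTilde (xt (unitVec i))) :
    ∀ k ∈ Kbar, k ≠ (0 : I → ℕ) → (∀ i, 1 ≤ k i → 0 < η i) →
      ∑ i, (k i : ℝ) * η i = wTilde (xt k) := by
  have hηnn : ∀ j, 0 ≤ η j := fun j => (hη j) ▸ wTilde_nonneg' _
  suffices H : ∀ n : ℕ, ∀ k : I → ℕ, k ∈ Kbar → k ≠ 0 →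
      (∀ i, 1 ≤ k i → 0 < η i) → ∑ j, k j = n →
      ∑ i, (k i : ℝ) * η i = wTilde (xt k) by
    intro k hk hk0 hkpos
    exact H _ k hk hk0 hkpos rfl
  intro n
  induction n using Nat.strong_induction_on with
  | _ n IH =>
  intro k hk hk0 hkpos hn
  obtain ⟨i, hi⟩ : ∃ i, 1 ≤ k i := by
    by_contra h
    push_neg at h
    exact hk0 (funext fun j => by have := h j; simp only [Pi.zero_apply]; omega)
  have hηi : 0 < η i := hkpos i hi
  have hxe : 0 < xt (unitVec i) := pos_of_wTilde_pos' (by rw [← hη]; exact hηi)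
  by_cases hcase : esub k i = 0
  · -- base case: k = unitVec i
    have hki : k = unitVec i := by
      funext j
      have h1 := congrFun hcase j
      by_cases hj : j = i <;> simp [esub, unitVec, hj] at h1 ⊢ <;> omega
    subst hki
    rw [Finset.sum_eq_single i]
    · simp [unitVec, hη]
    · intro j _ hj
      simp [unitVec, hj]
    · intro h; exact absurd (Finset.mem_univ i) h
  · -- inductive step
    have hesub_le : ∀ j, esub k i j ≤ k j := fun j => Nat.sub_le _ _
    have hsub_mem : esub k i ∈ Kbar := hmono k hk _ hesub_le
    have hsubpos : ∀ j, 1 ≤ esub k i j → 0 < η j := fun j hj =>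
      hkpos j (le_trans hj (hesub_le j))
    have hlt : ∑ j, esub k i j < n := by
      rw [← hn]
      apply Finset.sum_lt_sum (fun j _ => hesub_le j)
      exact ⟨i, Finset.mem_univ i, by simp [esub]; omega⟩
    have IHres : ∑ j, (esub k i j : ℝ) * η j = wTilde (xt (esub k i)) :=
      IH _ hlt _ hsub_mem hcase hsubpos rfl
    have hwsub : 0 < wTilde (xt (esub k i)) := by
      rw [← IHres]
      obtain ⟨j, hj⟩ : ∃ j, 1 ≤ esub k i j := by
        by_contra h
        push_neg at h
        exact hcase (funext fun j => by have := h j; simp only [Pi.zero_apply]; omega)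
      apply Finset.sum_pos'
      · exact fun j _ => mul_nonneg (Nat.cast_nonneg _) (hηnn j)
      · refine ⟨j, Finset.mem_univ j, mul_pos ?_ (hsubpos j hj)⟩
        exact_mod_cast Nat.lt_of_lt_of_le Nat.zero_lt_one hj
    have hxsub : 0 < xt (esub k i) := pos_of_wTilde_pos' hwsub
    have hmemk : MemM Kbar k i := ⟨hk, hk0, hi, hsub_mem⟩
    have hmemu : MemM Kbar (unitVec i) i := memM_unit' Kbar h0 hunit i
    -- no SI pair {(e_i,i),(k,i)}: η i ≤ Delta xt k i
    have h1 : η i ≤ Delta xt k i := by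
      by_contra h
      push_neg at h
      refine hnoSI (unitVec i) k i ⟨hmemu, hmemk, hxe, Or.inr ⟨hi, hxsub⟩, ?_⟩
      rw [delta_unit' xt hx0 i, ← hη]
      exact h
    have hD : Delta xt k i = wTilde (xt k) - wTilde (xt (esub k i)) := rfl
    have hwk : 0 < wTilde (xt k) := by linarith
    have hxk : 0 < xt k := pos_of_wTilde_pos' hwk
    -- no SI pair {(k,i),(e_i,i)}: Delta xt k i ≤ η i
    have h2 : Delta xt k i ≤ η i := by
      by_contra h
      push_neg at h
      refine hnoSI k (unitVec i) i ⟨hmemk, hmemu, hxk, Or.inl rfl, ?_⟩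
      rw [delta_unit' xt hx0 i, ← hη]
      exact h
    have hcast : ∀ j, (k j : ℝ) = (esub k i j : ℝ) + (if j = i then 1 else 0) := by
      intro j
      by_cases hj : j = i
      · rw [hj, if_pos rfl, show esub k i i = k i - 1 from by simp [esub],
          Nat.cast_sub hi]
        ring
      · simp [esub, hj]
    calc ∑ j, (k j : ℝ) * η j
        = ∑ j, ((esub k i j : ℝ) + if j = i then 1 else 0) * η j :=
          Finset.sum_congr rfl fun j _ => by rw [hcast j]
      _ = ∑ j, (esub k i j : ℝ) * η j + ∑ j, (if j = i then (1:ℝ) else 0) * η j := by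
          rw [← Finset.sum_add_distrib]
          exact Finset.sum_congr rfl fun j _ => by ring
      _ = wTilde (xt (esub k i)) + η i := by
          rw [IHres]
          congr 1
          simp [ite_mul]
      _ = wTilde (xt k) := by linarith

end SI
end

section
/- Let μ, μ₀ > 0 and let (ŷ(t), ỹ(t)) be a Lipschitz trajectory on [0,∞) with ỹ(t) ≥ 0, satisfying (d/dt) ŷ(t) = -μ ŷ(t) a.e., and (d/dt) ỹ(t) = μ ŷ(t) - μ₀ ỹ(t) a.e. whenever ỹ(t) > 0, and (d/dt) ỹ(t) = max(0, μ ŷ(t) - μ₀ ỹ(t)) a.e. whenever ỹ(t) = 0. Then ‖(ŷ(t), ỹ(t))‖ → 0 as t → ∞, uniformly over initial conditions with ‖(ŷ(0), ỹ(0))‖ ≤ ε; moreover sup over initial states with ‖(ŷ(0), ỹ(0))‖ ≤ ε of sup_{t≥0} ‖(ŷ(t), ỹ(t))‖ tends to 0 as ε → 0; in particular (ŷ(0), ỹ(0)) = (0,0) implies (ŷ(t), ỹ(t)) = (0,0) for all t. -/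
/-- A local-fluid-limit trajectory `g = (ŷ, ỹ)`: Lipschitz, with `ỹ ≥ 0`,
satisfying the stated ODE conditions almost everywhere. -/
def IsLocalFluidTraj (μ μ₀ : ℝ) (g : ℝ → ℝ × ℝ) : Prop :=
  (∃ L : NNReal, LipschitzWith L g) ∧ (∀ t : ℝ, 0 ≤ (g t).2) ∧
  (∀ᵐ t : ℝ, 0 ≤ t →
    HasDerivAt (fun s => (g s).1) (-μ * (g t).1) t ∧
    (0 < (g t).2 →
      HasDerivAt (fun s => (g s).2) (μ * (g t).1 - μ₀ * (g t).2) t) ∧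
    ((g t).2 = 0 →
      HasDerivAt (fun s => (g s).2) (max 0 (μ * (g t).1 - μ₀ * (g t).2)) t))


open MeasureTheory Set Filter Topology Function
open scoped ENNReal NNReal

/-- If `f` is Lipschitz on `[s,t]` and a.e. every derivative of `f` on `(s,t)` is `≤ 0`,
then `f t ≤ f s`. -/
lemma key_dec {f : ℝ → ℝ} {s t : ℝ} {L : NNReal} (hst : s ≤ t)
    (hf : LipschitzOnWith L f (Set.Icc s t))
    (hd : ∀ᵐ x : ℝ, x ∈ Set.Ioo s t → ∀ d, HasDerivAt f d x → d ≤ 0) :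
    f t ≤ f s := by
  rcases eq_or_lt_of_le hst with rfl | hst'
  · exact le_refl _
  set cl : ℝ → ℝ := fun x => max s (min x t) with hcl
  have clmem : ∀ x, cl x ∈ Icc s t := fun x => ⟨le_max_left _ _, max_le hst (min_le_right _ _)⟩
  have cllip : ∀ x y, |cl x - cl y| ≤ |x - y| := by
    intro x y
    have h1 : |cl x - cl y| ≤ max |s - s| |min x t - min y t| :=
      abs_max_sub_max_le_max s (min x t) s (min y t)
    have h2 : |min x t - min y t| ≤ max |x - y| |t - t| := abs_min_sub_min_le_max x t y t
    simp only [sub_self, abs_zero] at h1 h2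
    calc |cl x - cl y| ≤ max 0 |min x t - min y t| := h1
      _ = |min x t - min y t| := max_eq_right (abs_nonneg _)
      _ ≤ max |x - y| 0 := h2
      _ = |x - y| := max_eq_left (abs_nonneg _)
  have hfd : ∀ x y, |f (cl x) - f (cl y)| ≤ L * |x - y| := by
    intro x y
    have h := (lipschitzOnWith_iff_dist_le_mul.1 hf) _ (clmem x) _ (clmem y)
    rw [Real.dist_eq, Real.dist_eq] at h
    exact h.trans (mul_le_mul_of_nonneg_left (cllip x y) L.coe_nonneg)
  have hclts : cl t = t := by simp [hcl, min_self, max_eq_right hst]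
  have hclss : cl s = s := by simp [hcl, min_eq_left hst, max_self]
  set k : ℝ → ℝ := fun x => (L : ℝ) * x - f (cl x) with hk_def
  have hk : Monotone k := by
    intro x y hxy
    have h := hfd y x
    have h1 : f (cl y) - f (cl x) ≤ |f (cl y) - f (cl x)| := le_abs_self _
    have h2 : |y - x| = y - x := abs_of_nonneg (by linarith)
    simp only [hk_def]
    rw [h2] at h
    nlinarith
  have hkc : Continuous k := by
    have hlip : LipschitzWith L fun x => f (cl x) :=
      LipschitzWith.of_dist_le_mul fun x y => by
        rw [Real.dist_eq, Real.dist_eq]; exact hfd x y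
    exact (continuous_const.mul continuous_id).sub hlip.continuous
  have hks : ∀ x, hk.stieltjesFunction x = k x := by
    intro x
    rw [Monotone.stieltjesFunction_eq]
    exact rightLim_eq_of_tendsto
      (hkc.continuousAt.tendsto.mono_left nhdsWithin_le_nhds)
  set D : ℝ → ℝ≥0∞ := Measure.rnDeriv hk.stieltjesFunction.measure volume with hD
  have hbound : ∀ᵐ x : ℝ, x ∈ Ioo s t → (L : ℝ≥0∞) ≤ D x := by
    filter_upwards [hk.ae_hasDerivAt, hd] with x hx hdx hmem
    have hev : (fun y => f (cl y)) =ᶠ[𝓝 x] f := by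
      filter_upwards [isOpen_Ioo.mem_nhds hmem] with y hy
      have : cl y = y := by
        simp [hcl, min_eq_left hy.2.le, max_eq_right hy.1.le]
      rw [this]
    have hfx : HasDerivAt f ((L : ℝ) - (D x).toReal) x := by
      have h1 : HasDerivAt (fun y => (L : ℝ) * y - k y) ((L : ℝ) - (D x).toReal) x := by
        exact (((hasDerivAt_id x).const_mul (L : ℝ)).sub hx).congr_deriv (by rw [mul_one])
      have h2 : (fun y => (L : ℝ) * y - k y) = fun y => f (cl y) := by
        funext y; simp [hk_def]
      rw [h2] at h1
      exact h1.congr_of_eventuallyEq hev.symm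
    have hle : (L : ℝ) - (D x).toReal ≤ 0 := hdx hmem _ hfx
    have hLle : (L : ℝ) ≤ (D x).toReal := by linarith
    by_cases hDi : D x = ⊤
    · simp [hDi]
    · have := ENNReal.ofReal_le_ofReal hLle
      rwa [ENNReal.ofReal_coe_nnreal, ENNReal.ofReal_toReal hDi] at this
  have h1 : (L : ℝ≥0∞) * volume (Ioc s t) ≤ ∫⁻ x in Ioc s t, D x := by
    rw [← setLIntegral_const]
    refine lintegral_mono_ae ?_
    have hne : ∀ᵐ x : ℝ, x ≠ t := by
      rw [ae_iff]
      simp only [not_not, Set.setOf_eq_eq_singleton]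
      exact measure_singleton t
    rw [ae_restrict_iff' measurableSet_Ioc]
    filter_upwards [hbound, hne] with x hx hxe hxm
    exact hx ⟨hxm.1, lt_of_le_of_ne hxm.2 hxe⟩
  have h2 : ∫⁻ x in Ioc s t, D x ≤ hk.stieltjesFunction.measure (Ioc s t) :=
    Measure.setLIntegral_rnDeriv_le _
  have h3 : hk.stieltjesFunction.measure (Ioc s t) = ENNReal.ofReal (k t - k s) := by
    rw [StieltjesFunction.measure_Ioc, hks, hks]
  have h4 : ENNReal.ofReal ((L : ℝ) * (t - s)) ≤ ENNReal.ofReal (k t - k s) := by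
    calc ENNReal.ofReal ((L : ℝ) * (t - s))
        = (L : ℝ≥0∞) * ENNReal.ofReal (t - s) := by
          rw [ENNReal.ofReal_mul L.coe_nonneg, ENNReal.ofReal_coe_nnreal]
      _ = (L : ℝ≥0∞) * volume (Ioc s t) := by rw [Real.volume_Ioc]
      _ ≤ ∫⁻ x in Ioc s t, D x := h1
      _ ≤ _ := h2.trans_eq h3
  rw [ENNReal.ofReal_le_ofReal_iff'] at h4
  have hkts : k t - k s = (L : ℝ) * (t - s) - (f t - f s) := by
    simp only [hk_def, hclts, hclss]; ring
  rcases h4 with h4 | h4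
  · rw [hkts] at h4; linarith
  · have hL0 : (L : ℝ) * (t - s) = 0 :=
      le_antisymm h4 (mul_nonneg L.coe_nonneg (by linarith))
    have := hfd t s
    rw [hclts, hclss, abs_of_nonneg (by linarith : (0:ℝ) ≤ t - s)] at this
    rw [hL0] at this
    have := abs_nonpos_iff.1 (le_of_le_of_eq this rfl)
    linarith [le_of_eq this, abs_nonneg (f t - f s)]

noncomputable def Wfn (g : ℝ → ℝ × ℝ) (t : ℝ) : ℝ := 2 * |(g t).1| + (g t).2

section facts
variable {μ μ₀ : ℝ} {g : ℝ → ℝ × ℝ}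

lemma Wfn_nonneg (hg : IsLocalFluidTraj μ μ₀ g) (t : ℝ) : 0 ≤ Wfn g t :=
  add_nonneg (by positivity) (hg.2.1 t)

lemma norm1_le_Wfn (hg : IsLocalFluidTraj μ μ₀ g) (t : ℝ) :
    |(g t).1| + |(g t).2| ≤ Wfn g t := by
  have := hg.2.1 t
  rw [abs_of_nonneg this]
  simp only [Wfn]
  nlinarith [abs_nonneg (g t).1]

lemma Wfn_le_two_norm1 (t : ℝ) : Wfn g t ≤ 2 * (|(g t).1| + |(g t).2|) := by
  simp only [Wfn]
  nlinarith [abs_nonneg (g t).2, le_abs_self (g t).2]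

lemma Wfn_lip {L : NNReal} (hL : LipschitzWith L g) : LipschitzWith (3 * L) (Wfn g) := by
  refine LipschitzWith.of_dist_le_mul fun x y => ?_
  have h1 : |(g x).1 - (g y).1| ≤ dist (g x) (g y) := by
    rw [← Real.dist_eq, Prod.dist_eq]; exact le_max_left _ _
  have h2 : |(g x).2 - (g y).2| ≤ dist (g x) (g y) := by
    rw [← Real.dist_eq, Prod.dist_eq]; exact le_max_right _ _
  have h3 := hL.dist_le_mul x y
  have h4 : abs (|(g x).1| - |(g y).1|) ≤ |(g x).1 - (g y).1| := abs_abs_sub_abs_le_abs_sub _ _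
  have h5 : |Wfn g x - Wfn g y| ≤ 2 * abs (|(g x).1| - |(g y).1|) + |(g x).2 - (g y).2| := by
    calc |Wfn g x - Wfn g y|
        = |2 * (|(g x).1| - |(g y).1|) + ((g x).2 - (g y).2)| := by
          simp only [Wfn]; ring_nf
      _ ≤ |2 * (|(g x).1| - |(g y).1|)| + |(g x).2 - (g y).2| := abs_add_le _ _
      _ = 2 * abs (|(g x).1| - |(g y).1|) + |(g x).2 - (g y).2| := by
          rw [abs_mul]; norm_num
  rw [Real.dist_eq]
  push_cast
  nlinarith [dist_nonneg (x := g x) (y := g y)]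

/-- Master a.e. derivative bound for the Lyapunov function. -/
lemma Wfn_master (hμ : 0 < μ) (hμ₀ : 0 < μ₀) (hg : IsLocalFluidTraj μ μ₀ g) :
    ∀ᵐ x : ℝ, 0 < x → ∀ d, HasDerivAt (Wfn g) d x →
      d ≤ -(min (μ / 2) μ₀) * Wfn g x := by
  obtain ⟨⟨L, hL⟩, hpos, hode⟩ := hg
  have hy1lip : LipschitzWith L fun t => (g t).1 :=
    LipschitzWith.of_dist_le_mul fun x y => by
      refine le_trans ?_ (hL.dist_le_mul x y)
      rw [Prod.dist_eq]; exact le_max_left _ _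
  have ha1lip : LipschitzWith (1 * L) fun t => |(g t).1| := by
    have habs1 : LipschitzWith 1 (fun z : ℝ => |z|) :=
      LipschitzWith.of_dist_le_mul fun a b => by
        rw [Real.dist_eq, Real.dist_eq, NNReal.coe_one, one_mul]
        exact abs_abs_sub_abs_le_abs_sub _ _
    exact habs1.comp hy1lip
  have habs : ∀ᵐ x : ℝ, DifferentiableAt ℝ (fun t => |(g t).1|) x :=
    ha1lip.ae_differentiableAt_of_real
  filter_upwards [hode, habs] with x hodex hdiffx hxpos d hWd
  obtain ⟨h1, h2, h3⟩ := hodex hxpos.le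
  set c : ℝ := min (μ / 2) μ₀ with hc
  have hc1 : c ≤ μ / 2 := min_le_left _ _
  have hc2 : c ≤ μ₀ := min_le_right _ _
  -- derivative of |ŷ|
  have ha1 : HasDerivAt (fun t => |(g t).1|) (-μ * |(g x).1|) x := by
    rcases lt_trichotomy ((g x).1) 0 with h | h | h
    · have hev : (fun t => |(g t).1|) =ᶠ[𝓝 x] fun t => -(g t).1 := by
        filter_upwards [h1.continuousAt.preimage_mem_nhds (Iio_mem_nhds h)] with y hy
        exact abs_of_neg hy
      have := h1.neg
      have h' : HasDerivAt (fun t => |(g t).1|) (-(-μ * (g x).1)) x :=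
        this.congr_of_eventuallyEq hev
      convert h' using 1
      rw [abs_of_neg h]; ring
    · have hmin : IsLocalMin (fun t => |(g t).1|) x :=
        Filter.Eventually.of_forall fun y => by simp [h]
      have hd0 := hmin.deriv_eq_zero
      have := hdiffx.hasDerivAt
      rw [hd0] at this
      exact this.congr_deriv (by rw [h]; simp)
    · have hev : (fun t => |(g t).1|) =ᶠ[𝓝 x] fun t => (g t).1 := by
        filter_upwards [h1.continuousAt.preimage_mem_nhds (Ioi_mem_nhds h)] with y hy
        exact abs_of_pos hy
      have h' : HasDerivAt (fun t => |(g t).1|) (-μ * (g x).1) x :=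
        h1.congr_of_eventuallyEq hev
      convert h' using 1
      rw [abs_of_pos h]
  -- derivative of ỹ from W and |ŷ|
  have hy2d : HasDerivAt (fun t => (g t).2) (d - 2 * (-μ * |(g x).1|)) x := by
    have := hWd.sub (ha1.const_mul 2)
    have heq : (fun t => Wfn g t - 2 * |(g t).1|) = fun t => (g t).2 := by
      funext t; simp only [Wfn]; ring
    change HasDerivAt (fun t => Wfn g t - 2 * |(g t).1|) _ x at this
    rw [heq] at this
    convert this using 1
  set A := |(g x).1| with hA
  have hAnn : 0 ≤ A := abs_nonneg _
  have hy1A : (g x).1 ≤ A := le_abs_self _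
  set B := (g x).2 with hB
  have hBnn : 0 ≤ B := hpos x
  have hgoal : ∀ e : ℝ, HasDerivAt (fun t => (g t).2) e x → e ≤ μ * A - μ₀ * B →
      d ≤ -c * Wfn g x := by
    intro e he hle
    have huniq : d - 2 * (-μ * A) = e := hy2d.unique he
    have hW : Wfn g x = 2 * A + B := rfl
    rw [hW]
    have t1 : 0 ≤ (μ / 2 - c) * A := mul_nonneg (by linarith) hAnn
    have t2 : 0 ≤ (μ₀ - c) * B := mul_nonneg (by linarith) hBnn
    nlinarith
  rcases (hpos x).lt_or_eq with hB0 | hB0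
  · refine hgoal _ (h2 hB0) ?_
    have : μ * (g x).1 ≤ μ * A := by nlinarith
    linarith
  · refine hgoal _ (h3 hB0.symm) ?_
    have hBz : B = 0 := hB0.symm
    have : μ * (g x).1 ≤ μ * A := by nlinarith
    have hmax : max 0 (μ * (g x).1 - μ₀ * B) ≤ μ * A - μ₀ * B := by
      rw [hBz]
      refine max_le (by simp; positivity) (by simp; linarith)
    exact hmax

end facts

section main
variable {μ μ₀ : ℝ} {g : ℝ → ℝ × ℝ}

lemma Wfn_antitone (hμ : 0 < μ) (hμ₀ : 0 < μ₀) (hg : IsLocalFluidTraj μ μ₀ g) :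
    ∀ s t : ℝ, 0 ≤ s → s ≤ t → Wfn g t ≤ Wfn g s := by
  intro s t hs hst
  obtain ⟨L, hL⟩ := hg.1
  have hc : 0 < min (μ / 2) μ₀ := lt_min (by linarith) hμ₀
  refine key_dec hst (Wfn_lip hL).lipschitzOnWith ?_
  filter_upwards [Wfn_master hμ hμ₀ hg] with x hx hmem d hdx
  have h1 := hx (lt_of_le_of_lt hs hmem.1) d hdx
  nlinarith [Wfn_nonneg hg x]

lemma Wfn_decay (hμ : 0 < μ) (hμ₀ : 0 < μ₀) (hg : IsLocalFluidTraj μ μ₀ g)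
    {η t : ℝ} (hη : 0 < η) (ht : 0 ≤ t)
    (hWt : Wfn g 0 ≤ min (μ / 2) μ₀ * η * t) : Wfn g t ≤ η := by
  by_contra hcon
  push_neg at hcon
  obtain ⟨L, hL⟩ := hg.1
  set c : ℝ := min (μ / 2) μ₀ with hcdef
  have hc : 0 < c := lt_min (by linarith) hμ₀
  set K : NNReal := 3 * L + Real.toNNReal (c * η) with hK
  have hlin : ∀ x y : ℝ, |c * η * x - c * η * y| ≤ c * η * |x - y| := by
    intro x y
    rw [← mul_sub, abs_mul, abs_of_nonneg (by positivity : (0:ℝ) ≤ c * η)]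
  have hflip : LipschitzOnWith K (fun x => Wfn g x + c * η * x) (Set.Icc 0 t) := by
    refine lipschitzOnWith_iff_dist_le_mul.2 fun x _ y _ => ?_
    have h1 := (Wfn_lip hL).dist_le_mul x y
    rw [Real.dist_eq] at h1 ⊢
    rw [Real.dist_eq] at h1 ⊢
    have h2 := hlin x y
    have hKc : (K : ℝ) = 3 * L + c * η := by
      rw [hK]
      push_cast [Real.coe_toNNReal _ (by positivity : (0:ℝ) ≤ c * η)]
      ring
    rw [hKc]
    calc |Wfn g x + c * η * x - (Wfn g y + c * η * y)|
        ≤ |Wfn g x - Wfn g y| + |c * η * x - c * η * y| := by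
          have := abs_add_le (Wfn g x - Wfn g y) (c * η * x - c * η * y)
          have e : Wfn g x + c * η * x - (Wfn g y + c * η * y) = (Wfn g x - Wfn g y) + (c * η * x - c * η * y) := by ring
          rw [e]; exact this
      _ ≤ 3 * L * |x - y| + c * η * |x - y| := by
          push_cast at h1
          exact add_le_add h1 h2
      _ = (3 * L + c * η) * |x - y| := by ring
  have hkey := key_dec ht hflip ?_
  · have h0 : Wfn g t + c * η * t ≤ Wfn g 0 + c * η * 0 := hkey
    have := Wfn_nonneg hg t
    simp only [mul_zero] at h0
    linarith
  · filter_upwards [Wfn_master hμ hμ₀ hg] with x hx hmem d hdx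
    have hWd : HasDerivAt (Wfn g) (d - c * η) x := by
      have h1 : HasDerivAt (fun y : ℝ => c * η * y) (c * η) x := by
        simpa using (hasDerivAt_id x).const_mul (c * η)
      have := hdx.sub h1
      have heq : (fun y => Wfn g y + c * η * y - c * η * y) = Wfn g := by
        funext y; ring
      change HasDerivAt (fun y => Wfn g y + c * η * y - c * η * y) _ x at this
      rwa [heq] at this
    have h2 := hx hmem.1 _ hWd
    have h3 : Wfn g x ≥ Wfn g t := Wfn_antitone hμ hμ₀ hg x t hmem.1.le hmem.2.le
    nlinarith
end main

/-- The `ℓ¹` norm on `ℝ²`. -/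
def norm1 (u : ℝ × ℝ) : ℝ := |u.1| + |u.2|

/-- Local fluid trajectories converge to `0`, uniformly over initial conditions
with `‖g(0)‖ ≤ ε`; the sup over such trajectories of `sup_t ‖g(t)‖` tends to `0`
as `ε → 0`; and `g(0) = 0` implies `g ≡ 0`. -/
theorem stmt11 (μ μ₀ : ℝ) (hμ : 0 < μ) (hμ₀ : 0 < μ₀) :
    (∀ ε > (0 : ℝ), ∀ η > (0 : ℝ), ∃ T : ℝ, 0 < T ∧
      ∀ g : ℝ → ℝ × ℝ, IsLocalFluidTraj μ μ₀ g → norm1 (g 0) ≤ ε →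
        ∀ t : ℝ, T ≤ t → norm1 (g t) ≤ η) ∧
    (∀ η > (0 : ℝ), ∃ ε > (0 : ℝ),
      ∀ g : ℝ → ℝ × ℝ, IsLocalFluidTraj μ μ₀ g → norm1 (g 0) ≤ ε →
        ∀ t : ℝ, 0 ≤ t → norm1 (g t) ≤ η) ∧
    (∀ g : ℝ → ℝ × ℝ, IsLocalFluidTraj μ μ₀ g → g 0 = (0, 0) →
      ∀ t : ℝ, 0 ≤ t → g t = (0, 0)) := by
  have hc : 0 < min (μ / 2) μ₀ := lt_min (by linarith) hμ₀
  refine ⟨?_, ?_, ?_⟩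
  · intro ε hε η hη
    refine ⟨max 1 (2 * ε / (min (μ / 2) μ₀ * η)),
      lt_of_lt_of_le one_pos (le_max_left _ _), ?_⟩
    intro g hg h0 t hT
    have ht0 : (0:ℝ) ≤ t := le_trans (le_trans zero_le_one (le_max_left _ _)) hT
    have h2 : 2 * ε / (min (μ / 2) μ₀ * η) ≤ t := le_trans (le_max_right _ _) hT
    rw [div_le_iff₀ (by positivity)] at h2
    have hW0 : Wfn g 0 ≤ 2 * ε := by
      have := Wfn_le_two_norm1 (g := g) 0
      simp only [norm1] at h0
      linarith
    have hWt : Wfn g t ≤ η := Wfn_decay hμ hμ₀ hg hη ht0 (by nlinarith)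
    have := norm1_le_Wfn hg t
    simp only [norm1]
    linarith
  · intro η hη
    refine ⟨η / 2, by positivity, ?_⟩
    intro g hg h0 t ht
    have h1 := Wfn_antitone hμ hμ₀ hg 0 t le_rfl ht
    have h2 := Wfn_le_two_norm1 (g := g) 0
    have h3 := norm1_le_Wfn hg t
    simp only [norm1] at h0 ⊢
    linarith
  · intro g hg h0 t ht
    have h1 : Wfn g 0 = 0 := by simp [Wfn, h0]
    have h2 : Wfn g t ≤ 0 := (Wfn_antitone hμ hμ₀ hg 0 t le_rfl ht).trans_eq h1
    have ha : 0 ≤ |(g t).1| := abs_nonneg _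
    have hb : 0 ≤ (g t).2 := hg.2.1 t
    simp only [Wfn] at h2
    have hA : |(g t).1| = 0 := by linarith
    exact Prod.ext (abs_eq_zero.1 hA) (by simpa using le_antisymm (by linarith) hb)
end

section
/- Consider the continuous-time Markov chain U(t) = (Ŷ(t), Ỹ(t)) on ℤ₊² with transition rates: (ŷ, ỹ) → (ŷ+1, ỹ - 1_{ỹ>0}) at rate λr; (ŷ, ỹ) → (ŷ-1, ỹ+1) at rate μŷ; (ŷ, ỹ) → (ŷ, ỹ-1) at rate μ₀ỹ (where λ, μ, μ₀ > 0, ρ = λ/μ). Define h(u) = √((ŷ - ρr)² + (μ₀/μ) ỹ²) and G(u) = exp(h(u)/√r). Then there are constants c₃, c₄ > 0, independent of r, such that for all sufficiently large r and all states u with h(u) ≥ √r, the formal generator applied to h satisfies Āh(u) ≤ -c₄ h(u) + (c₃/√r)(λr + μŷ + μ₀ỹ). -/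
/-- The Lyapunov function `h(u) = √((ŷ - ρr)² + (μ₀/μ) ỹ²)`, where `ρ = λ/μ`. -/
noncomputable def hFun (lam mu mu0 r : ℝ) (u : ℕ × ℕ) : ℝ :=
  Real.sqrt (((u.1 : ℝ) - (lam / mu) * r) ^ 2 + (mu0 / mu) * (u.2 : ℝ) ^ 2)

/-- The formal generator of the chain with transitions
`(ŷ,ỹ) → (ŷ+1, ỹ - 1_{ỹ>0})` at rate `λr`, `(ŷ,ỹ) → (ŷ-1, ỹ+1)` at rate `μŷ`,
`(ŷ,ỹ) → (ŷ, ỹ-1)` at rate `μ₀ỹ`, applied to `h`. -/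
noncomputable def genH (lam mu mu0 r : ℝ) (u : ℕ × ℕ) : ℝ :=
  lam * r * (hFun lam mu mu0 r (u.1 + 1, u.2 - 1) - hFun lam mu mu0 r u)
    + mu * (u.1 : ℝ) * (hFun lam mu mu0 r (u.1 - 1, u.2 + 1) - hFun lam mu mu0 r u)
    + mu0 * (u.2 : ℝ) * (hFun lam mu mu0 r (u.1, u.2 - 1) - hFun lam mu mu0 r u)

private lemma sqrt_diff_le (A B : ℝ) (hA : 0 ≤ A) (hB : 0 < B) :
    Real.sqrt A - Real.sqrt B ≤ (A - B) / (2 * Real.sqrt B) := by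
  have hsB : 0 < Real.sqrt B := Real.sqrt_pos.2 hB
  rw [le_div_iff₀ (by positivity)]
  nlinarith [Real.sq_sqrt hA, Real.sq_sqrt hB.le, sq_nonneg (Real.sqrt A - Real.sqrt B),
    Real.sqrt_nonneg A]

private lemma numer_bound (lam mu c r x y z : ℝ) (hlam : 0 < lam) (hmu : 0 < mu)
    (hc : 0 < c) (hr : 0 < r) (hy : 0 ≤ y) (hz : 0 ≤ z)
    (hx : mu * x = mu * z - lam * r) :
    lam * r * (((x+1)^2 + c*(y-1)^2) - (x^2 + c*y^2))
      + mu * z * (((x-1)^2 + c*(y+1)^2) - (x^2 + c*y^2))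
      + (mu*c) * y * ((x^2 + c*(y-1)^2) - (x^2 + c*y^2))
    ≤ -(min mu (mu*c)) * (x^2 + c*y^2) + (1 + c) * (lam*r + mu*z + (mu*c)*y) := by
  have hκ1 : min mu (mu*c) ≤ mu := min_le_left _ _
  have hκ2 : min mu (mu*c) ≤ mu*c := min_le_right _ _
  have h1 : (mu * x - (mu * z - lam * r)) * (2*x - 2*c*y) = 0 := by rw [hx]; ring
  nlinarith [h1, mul_nonneg (sub_nonneg.2 hκ1) (sq_nonneg x),
    mul_nonneg (mul_nonneg hc.le (sub_nonneg.2 hκ2)) (sq_nonneg y),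
    mul_nonneg hmu.le (sq_nonneg (x - c*y)),
    mul_nonneg (mul_nonneg hmu.le hc.le) hy]

/-- Drift bound: there are `c₃, c₄ > 0` independent of `r` such that for all
large `r` and all states `u` with `h(u) ≥ √r`,
`Āh(u) ≤ -c₄ h(u) + (c₃/√r)(λr + μŷ + μ₀ỹ)`. -/
theorem stmt13 (lam mu mu0 : ℝ) (hlam : 0 < lam) (hmu : 0 < mu) (hmu0 : 0 < mu0) :
    ∃ c₃ > (0 : ℝ), ∃ c₄ > (0 : ℝ), ∃ r₀ : ℝ, 1 ≤ r₀ ∧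
      ∀ r : ℝ, r₀ ≤ r → ∀ u : ℕ × ℕ,
        Real.sqrt r ≤ hFun lam mu mu0 r u →
        genH lam mu mu0 r u
          ≤ -c₄ * hFun lam mu mu0 r u
            + (c₃ / Real.sqrt r) * (lam * r + mu * (u.1 : ℝ) + mu0 * (u.2 : ℝ)) := by
  have hc : (0:ℝ) < mu0 / mu := div_pos hmu0 hmu
  refine ⟨(1 + mu0/mu)/2, by positivity, min mu mu0 / 2, by positivity, 1, le_rfl, ?_⟩
  intro r hr u hhr
  obtain ⟨n, m⟩ := u
  have hrpos : (0:ℝ) < r := lt_of_lt_of_le one_pos hr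
  have hcm : mu * (mu0 / mu) = mu0 := mul_div_cancel₀ mu0 hmu.ne'
  have hn0 : (0:ℝ) ≤ (n:ℝ) := Nat.cast_nonneg _
  have hm0 : (0:ℝ) ≤ (m:ℝ) := Nat.cast_nonneg _
  show genH lam mu mu0 r (n, m)
      ≤ -(min mu mu0 / 2) * hFun lam mu mu0 r (n, m)
        + ((1 + mu0/mu)/2 / Real.sqrt r) * (lam * r + mu * (n:ℝ) + mu0 * (m:ℝ))
  set X : ℝ := (n:ℝ) - lam/mu*r with hX
  set B : ℝ := X^2 + (mu0/mu)*(m:ℝ)^2 with hBdef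
  have e0 : hFun lam mu mu0 r (n, m) = Real.sqrt B := rfl
  set h := hFun lam mu mu0 r (n, m) with hhdef
  have hBnn : (0:ℝ) ≤ B := by positivity
  have hsr : 0 < Real.sqrt r := Real.sqrt_pos.2 hrpos
  have hpos : 0 < h := lt_of_lt_of_le hsr hhr
  have hsq : h^2 = B := by rw [e0, Real.sq_sqrt hBnn]
  have key : ∀ A : ℝ, 0 ≤ A → Real.sqrt A - h ≤ (A - B) / (2 * h) := by
    intro A hA
    have h2 := sqrt_diff_le A (h^2) hA (by positivity)
    rwa [Real.sqrt_sq hpos.le, hsq] at h2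
  -- three jump bounds
  have t1 : lam * r * (hFun lam mu mu0 r (n+1, m-1) - h)
      ≤ lam * r * ((((X+1)^2 + (mu0/mu)*((m:ℝ)-1)^2) - B) / (2*h)) := by
    refine mul_le_mul_of_nonneg_left ?_ (by positivity)
    have ef : hFun lam mu mu0 r (n+1, m-1)
        = Real.sqrt ((((n+1:ℕ):ℝ) - lam/mu*r)^2 + (mu0/mu)*(((m-1:ℕ)):ℝ)^2) := rfl
    rcases Nat.eq_zero_or_pos m with hm | hm
    · subst hm
      have e1 : (((n+1:ℕ):ℝ) - lam/mu*r)^2 + (mu0/mu)*(((0-1:ℕ)):ℝ)^2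
          = (X+1)^2 := by push_cast [hX]; ring
      rw [ef, e1]
      refine (key _ (by positivity)).trans ?_
      gcongr
      nlinarith [hc]
    · have e1 : (((n+1:ℕ):ℝ) - lam/mu*r)^2 + (mu0/mu)*(((m-1:ℕ)):ℝ)^2
          = (X+1)^2 + (mu0/mu)*((m:ℝ)-1)^2 := by
        rw [Nat.cast_sub hm]; push_cast [hX]; ring
      rw [ef, e1]
      exact key _ (by positivity)
  have t2 : mu * (n:ℝ) * (hFun lam mu mu0 r (n-1, m+1) - h)
      ≤ mu * (n:ℝ) * ((((X-1)^2 + (mu0/mu)*((m:ℝ)+1)^2) - B) / (2*h)) := by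
    rcases Nat.eq_zero_or_pos n with hn | hn
    · subst hn; norm_num
    · refine mul_le_mul_of_nonneg_left ?_ (by positivity)
      have ef : hFun lam mu mu0 r (n-1, m+1)
          = Real.sqrt ((((n-1:ℕ):ℝ) - lam/mu*r)^2 + (mu0/mu)*(((m+1:ℕ)):ℝ)^2) := rfl
      have e1 : (((n-1:ℕ):ℝ) - lam/mu*r)^2 + (mu0/mu)*(((m+1:ℕ)):ℝ)^2
          = (X-1)^2 + (mu0/mu)*((m:ℝ)+1)^2 := by
        rw [Nat.cast_sub hn]; push_cast [hX]; ring
      rw [ef, e1]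
      exact key _ (by positivity)
  have t3 : mu0 * (m:ℝ) * (hFun lam mu mu0 r (n, m-1) - h)
      ≤ mu0 * (m:ℝ) * (((X^2 + (mu0/mu)*((m:ℝ)-1)^2) - B) / (2*h)) := by
    rcases Nat.eq_zero_or_pos m with hm | hm
    · subst hm; norm_num
    · refine mul_le_mul_of_nonneg_left ?_ (by positivity)
      have ef : hFun lam mu mu0 r (n, m-1)
          = Real.sqrt (((n:ℝ) - lam/mu*r)^2 + (mu0/mu)*(((m-1:ℕ)):ℝ)^2) := rfl
      have e1 : ((n:ℝ) - lam/mu*r)^2 + (mu0/mu)*(((m-1:ℕ)):ℝ)^2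
          = X^2 + (mu0/mu)*((m:ℝ)-1)^2 := by
        rw [Nat.cast_sub hm]; push_cast [hX]; ring
      rw [ef, e1]
      exact key _ (by positivity)
  -- combine
  have hgen : genH lam mu mu0 r (n, m)
      = lam * r * (hFun lam mu mu0 r (n+1, m-1) - h)
        + mu * (n:ℝ) * (hFun lam mu mu0 r (n-1, m+1) - h)
        + mu0 * (m:ℝ) * (hFun lam mu mu0 r (n, m-1) - h) := rfl
  have hx : mu * X = mu * (n:ℝ) - lam * r := by
    rw [hX]; field_simp
  have hnum := numer_bound lam mu (mu0/mu) r X (m:ℝ) (n:ℝ) hlam hmu hc hrpos hm0 hn0 hx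
  rw [hcm] at hnum
  rw [← hBdef] at hnum
  set M : ℝ := lam*r + mu*(n:ℝ) + mu0*(m:ℝ) with hM
  have hMnn : 0 ≤ M := by rw [hM]; positivity
  have step1 : genH lam mu mu0 r (n, m)
      ≤ (lam * r * (((X+1)^2 + (mu0/mu)*((m:ℝ)-1)^2) - B)
          + mu * (n:ℝ) * (((X-1)^2 + (mu0/mu)*((m:ℝ)+1)^2) - B)
          + mu0 * (m:ℝ) * ((X^2 + (mu0/mu)*((m:ℝ)-1)^2) - B)) / (2*h) := by
    rw [hgen]
    refine (add_le_add (add_le_add t1 t2) t3).trans (le_of_eq ?_)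
    ring
  have step2 : genH lam mu mu0 r (n, m)
      ≤ (-(min mu mu0) * B + (1 + mu0/mu) * M) / (2*h) := by
    refine step1.trans ?_
    gcongr (?_) / (2*h)
  refine step2.trans ?_
  have eq1 : (-(min mu mu0) * B + (1 + mu0/mu) * M) / (2*h)
      = -(min mu mu0 / 2) * h + ((1 + mu0/mu) * M) / (2*h) := by
    rw [← hsq]; field_simp
  rw [eq1]
  refine add_le_add le_rfl ?_
  have e2 : ((1 + mu0/mu)/2 / Real.sqrt r) * M = ((1 + mu0/mu) * M) / (2 * Real.sqrt r) := by
    ring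
  rw [e2]
  gcongr
end

section
/- Let Π be a unit-rate Poisson process. For fixed T > 0 and p ∈ (1/2, 1), with probability 1 the following holds: for any choice of points t₀^r ∈ [0, T r^{2-p}] and any ξ ∈ [0,1], (1/r^{2p-1})(Π(t₀^r + ξ r^{2p-1}) - Π(t₀^r)) → ξ as r → ∞, uniformly over t₀^r and ξ: for every ε > 0 there exists r(ε) such that for all r ≥ r(ε), sup over ξ ∈ [0,1] and t₀ ∈ [0, Tr^{2-p}] of |(1/r^{2p-1})(Π(t₀ + ξ r^{2p-1}) - Π(t₀)) - ξ| < ε. -/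
open MeasureTheory ProbabilityTheory Real
open scoped NNReal ENNReal Nat

lemma poisson_exp_sum (l : ℝ≥0) (t : ℝ) :
    ∑' n : ℕ, ENNReal.ofReal (Real.exp (t * n)) * poissonPMF l n
      = ENNReal.ofReal (Real.exp ((l : ℝ) * (Real.exp t - 1))) := by
  have hpmf : ∀ n : ℕ, poissonPMF l n = ENNReal.ofReal (poissonPMFReal l n) := fun n => rfl
  have hterm : ∀ n : ℕ, Real.exp (t * n) * poissonPMFReal l n
      = Real.exp (-(l:ℝ)) * (((l:ℝ) * Real.exp t) ^ n / n !) := by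
    intro n
    unfold poissonPMFReal
    rw [mul_pow, ← Real.exp_nat_mul, mul_comm t (n:ℝ)]
    ring
  have hsum : HasSum (fun n : ℕ => Real.exp (t * n) * poissonPMFReal l n)
      (Real.exp ((l : ℝ) * (Real.exp t - 1))) := by
    have h1 : HasSum (fun n : ℕ => ((l:ℝ) * Real.exp t) ^ n / n !)
        (Real.exp ((l:ℝ) * Real.exp t)) := by
      rw [Real.exp_eq_exp_ℝ]
      exact NormedSpace.expSeries_div_hasSum_exp _
    have := h1.mul_left (Real.exp (-(l:ℝ)))
    rw [← Real.exp_add] at this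
    have he : -(l:ℝ) + (l:ℝ) * Real.exp t = (l:ℝ) * (Real.exp t - 1) := by ring
    rw [he] at this
    simpa only [hterm] using this
  calc ∑' n : ℕ, ENNReal.ofReal (Real.exp (t * n)) * poissonPMF l n
      = ∑' n : ℕ, ENNReal.ofReal (Real.exp (t * n) * poissonPMFReal l n) := by
        simp_rw [hpmf]
        congr 1; funext n
        rw [ENNReal.ofReal_mul (Real.exp_nonneg _)]
    _ = ENNReal.ofReal (Real.exp ((l : ℝ) * (Real.exp t - 1))) := by
        rw [← ENNReal.ofReal_tsum_of_nonneg (fun n => mul_nonneg (Real.exp_nonneg _) poissonPMFReal_nonneg) hsum.summable,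
          hsum.tsum_eq]

lemma poisson_chernoff (l : ℝ≥0) (S : Set ℕ) (t d : ℝ) (h : ∀ n ∈ S, 0 ≤ t * n + d) :
    poissonMeasure l S ≤ ENNReal.ofReal (Real.exp (d + (l:ℝ) * (Real.exp t - 1))) := by
  rw [show poissonMeasure l = (poissonPMF l).toMeasure from Measure.ext_iff_singleton.mpr (fun n => by
    rw [poissonMeasure_singleton, PMF.toMeasure_apply_singleton _ n (measurableSet_singleton n)]; rfl),
    PMF.toMeasure_apply _ (MeasurableSet.of_discrete (s := S))]
  have hle : ∀ n : ℕ, S.indicator (⇑(poissonPMF l)) n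
      ≤ ENNReal.ofReal (Real.exp (t * n + d)) * poissonPMF l n := by
    intro n
    by_cases hn : n ∈ S
    · rw [Set.indicator_of_mem hn]
      nth_rewrite 1 [← one_mul ((poissonPMF l) n)]
      gcongr
      rw [show (1 : ℝ≥0∞) = ENNReal.ofReal 1 by simp]
      exact ENNReal.ofReal_le_ofReal (by rw [← Real.exp_zero]; exact Real.exp_le_exp.mpr (h n hn))
    · simp [Set.indicator_of_notMem hn]
  calc ∑' n, S.indicator (⇑(poissonPMF l)) n
      ≤ ∑' n : ℕ, ENNReal.ofReal (Real.exp (t * n + d)) * poissonPMF l n :=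
        ENNReal.tsum_le_tsum hle
    _ = ENNReal.ofReal (Real.exp d) * ∑' n : ℕ, ENNReal.ofReal (Real.exp (t * n)) * poissonPMF l n := by
        rw [← ENNReal.tsum_mul_left]
        congr 1; funext n
        rw [Real.exp_add, ENNReal.ofReal_mul (Real.exp_nonneg _), mul_comm (ENNReal.ofReal (rexp (t*n))), mul_assoc]
    _ = ENNReal.ofReal (Real.exp (d + (l:ℝ) * (Real.exp t - 1))) := by
        rw [poisson_exp_sum, ← ENNReal.ofReal_mul (Real.exp_nonneg _), ← Real.exp_add]

lemma exp_sq_bound {x : ℝ} (h : |x| ≤ 1) : Real.exp x ≤ 1 + x + x ^ 2 := by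
  have hb := Real.exp_bound h (n := 2) (by norm_num)
  have h2 : ∑ i ∈ Finset.range 2, x ^ i / i.factorial = 1 + x := by
    simp [Finset.sum_range_succ]
  rw [h2] at hb
  have h1 := (abs_sub_le_iff.mp hb).1
  have h4 : |x| ^ 2 = x ^ 2 := sq_abs x
  rw [h4] at h1
  norm_num [Nat.factorial] at h1
  nlinarith [sq_nonneg x]

lemma poisson_dev (l : ℝ≥0) (η : ℝ) (hη0 : 0 < η) (hη1 : η ≤ 1) :
    poissonMeasure l {n : ℕ | η * l ≤ |(n:ℝ) - l|}
      ≤ 2 * ENNReal.ofReal (Real.exp (-((l:ℝ) * η ^ 2 / 4))) := by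
  have hl : (0:ℝ) ≤ l := l.coe_nonneg
  have ht0 : (0:ℝ) < η / 2 := by positivity
  have hexp1 : Real.exp (η / 2) ≤ 1 + η / 2 + (η / 2) ^ 2 :=
    exp_sq_bound (by rw [abs_of_pos ht0]; linarith)
  have hexp2 : Real.exp (-(η / 2)) ≤ 1 - η / 2 + (η / 2) ^ 2 := by
    have := exp_sq_bound (x := -(η / 2)) (by rw [abs_neg, abs_of_pos ht0]; linarith)
    nlinarith [this]
  have hsub : {n : ℕ | η * l ≤ |(n:ℝ) - l|}
      ⊆ {n : ℕ | (1 + η) * l ≤ (n:ℝ)} ∪ {n : ℕ | (n:ℝ) ≤ (1 - η) * l} := by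
    intro n hn
    simp only [Set.mem_setOf_eq, Set.mem_union] at hn ⊢
    rcases le_abs.mp hn with h | h
    · left; linarith
    · right; linarith
  have hb1 : poissonMeasure l {n : ℕ | (1 + η) * l ≤ (n:ℝ)}
      ≤ ENNReal.ofReal (Real.exp (-((l:ℝ) * η ^ 2 / 4))) := by
    refine le_trans (poisson_chernoff l _ (η / 2) (-(η / 2 * ((1 + η) * l)))
      (fun n hn => by simp only [Set.mem_setOf_eq] at hn; nlinarith)) ?_
    apply ENNReal.ofReal_le_ofReal
    apply Real.exp_le_exp.mpr
    nlinarith [mul_le_mul_of_nonneg_left hexp1 hl]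
  have hb2 : poissonMeasure l {n : ℕ | (n:ℝ) ≤ (1 - η) * l}
      ≤ ENNReal.ofReal (Real.exp (-((l:ℝ) * η ^ 2 / 4))) := by
    refine le_trans (poisson_chernoff l _ (-(η / 2)) (η / 2 * ((1 - η) * l))
      (fun n hn => by simp only [Set.mem_setOf_eq] at hn; nlinarith)) ?_
    apply ENNReal.ofReal_le_ofReal
    apply Real.exp_le_exp.mpr
    nlinarith [mul_le_mul_of_nonneg_left hexp2 hl]
  calc poissonMeasure l {n : ℕ | η * l ≤ |(n:ℝ) - l|}
      ≤ poissonMeasure l ({n : ℕ | (1 + η) * l ≤ (n:ℝ)} ∪ {n : ℕ | (n:ℝ) ≤ (1 - η) * l}) :=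
        measure_mono hsub
    _ ≤ poissonMeasure l {n : ℕ | (1 + η) * l ≤ (n:ℝ)}
        + poissonMeasure l {n : ℕ | (n:ℝ) ≤ (1 - η) * l} := measure_union_le _ _
    _ ≤ 2 * ENNReal.ofReal (Real.exp (-((l:ℝ) * η ^ 2 / 4))) := by
        rw [two_mul]; exact add_le_add hb1 hb2

lemma telescope {f : ℝ → ℝ} {m η : ℝ} (hη : 0 ≤ η * m) {M : ℕ}
    (h : ∀ i < M, |f ((i + 1) * m) - f (i * m) - m| ≤ η * m) :
    ∀ v ≤ M, ∀ u ≤ v, |f (v * m) - f (u * m) - ((v : ℝ) - u) * m| ≤ η * (((v : ℝ) - u) * m) := by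
  intro v
  induction v with
  | zero =>
      intro _ u hu
      interval_cases u
      simp
  | succ v ih =>
      intro hv u hu
      rcases Nat.lt_or_ge u (v + 1) with hlt | hge
      · have hu' : u ≤ v := Nat.lt_succ_iff.mp hlt
        have h1 := h v (Nat.lt_of_lt_of_le (Nat.lt_succ_self v) hv)
        have h2 := ih (Nat.le_of_succ_le hv) u hu'
        have key : f ((v + 1 : ℕ) * m) - f (u * m) - (((v + 1 : ℕ) : ℝ) - u) * m
            = (f ((v + 1) * m) - f (v * m) - m)
              + (f (v * m) - f (u * m) - ((v : ℝ) - u) * m) := by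
          push_cast
          ring
        rw [key]
        calc |(f ((v + 1) * m) - f (v * m) - m)
              + (f (v * m) - f (u * m) - ((v : ℝ) - u) * m)|
            ≤ |f ((v + 1) * m) - f (v * m) - m|
              + |f (v * m) - f (u * m) - ((v : ℝ) - u) * m| := abs_add_le _ _
          _ ≤ η * m + η * (((v : ℝ) - u) * m) := by
              apply add_le_add ?_ h2
              have : ((v : ℝ) + 1) * m = ((v + 1 : ℕ) : ℝ) * m := by push_cast; ring
              simpa [this] using h1
          _ ≤ η * ((((v + 1 : ℕ) : ℝ) - u) * m) := by
              push_cast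
              have hc : ((u : ℝ)) ≤ v := by exact_mod_cast hu'
              nlinarith
      · have : u = v + 1 := le_antisymm hu hge
        subst this
        simp

lemma det_approx {f : ℝ → ℝ} (hf : Monotone f) {m η : ℝ} (hm : 0 < m)
    (hη0 : 0 ≤ η) (hη1 : η ≤ 1) {M : ℕ}
    (h : ∀ i < M, |f ((i + 1) * m) - f (i * m) - m| ≤ η * m)
    {a b : ℝ} (ha : 0 ≤ a) (hab : a ≤ b) (hbM : b + m ≤ M * m) :
    |f b - f a - (b - a)| ≤ η * (b - a) + 2 * m * (1 + η) := by
  have tel := telescope (mul_nonneg hη0 hm.le) h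
  have ham : 0 ≤ a / m := div_nonneg ha hm.le
  have habm : a / m ≤ b / m := by gcongr
  set u : ℕ := ⌊a / m⌋₊ with hu_def
  set v : ℕ := ⌊b / m⌋₊ + 1 with hv_def
  set u' : ℕ := ⌈a / m⌉₊ with hu'_def
  set v' : ℕ := ⌊b / m⌋₊ with hv'_def
  have hum : (u : ℝ) * m ≤ a := by
    have := Nat.floor_le ham
    calc (u : ℝ) * m ≤ (a / m) * m := by nlinarith
      _ = a := div_mul_cancel₀ a hm.ne'
  have hbv : b ≤ (v : ℝ) * m := by
    have h1 : b / m < (v : ℝ) := by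
      have := Nat.lt_floor_add_one (b / m)
      push_cast [hv_def]
      linarith
    calc b = (b / m) * m := (div_mul_cancel₀ b hm.ne').symm
      _ ≤ (v : ℝ) * m := by nlinarith
  have hvM : v ≤ M := by
    have h1 : (v : ℝ) ≤ M := by
      have h2 : (⌊b / m⌋₊ : ℝ) ≤ b / m := Nat.floor_le (le_trans ham habm)
      have h3 : b / m + 1 ≤ M := by
        rw [div_add' _ _ _ hm.ne', div_le_iff₀ hm]
        linarith
      push_cast [hv_def]
      linarith
    exact_mod_cast h1
  have huv : u ≤ v := le_trans (Nat.floor_mono habm) (Nat.le_succ _)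
  have hfu : f (u * m) ≤ f a := hf hum
  have hfv : f b ≤ f (v * m) := hf hbv
  have hvu2 : ((v : ℝ) - u) * m ≤ (b - a) + 2 * m := by
    have h1 : (v : ℝ) ≤ b / m + 1 := by
      have : (⌊b / m⌋₊ : ℝ) ≤ b / m := Nat.floor_le (le_trans ham habm)
      push_cast [hv_def]; linarith
    have h2 : a / m - 1 < (u : ℝ) := Nat.sub_one_lt_floor (a / m)
    have h3 : ((v : ℝ) - u) ≤ (b - a) / m + 2 := by
      have hb' : b / m - a / m = (b - a) / m := by ring
      linarith
    calc ((v : ℝ) - u) * m ≤ ((b - a) / m + 2) * m := by nlinarith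
      _ = (b - a) + 2 * m := by field_simp
  have hvu0 : (0:ℝ) ≤ (v : ℝ) - u := by
    have : (u:ℝ) ≤ v := by exact_mod_cast huv
    linarith
  -- upper bound
  have hupper : f b - f a - (b - a) ≤ η * (b - a) + 2 * m * (1 + η) := by
    have htel := (abs_le.mp (tel v hvM u huv)).2
    have hpm : η * (((v : ℝ) - u) * m) ≤ η * ((b - a) + 2 * m) :=
      mul_le_mul_of_nonneg_left hvu2 hη0
    have hexp : η * ((b - a) + 2 * m) = η * (b - a) + 2 * (m * η) := by ring
    have hgoal : η * (b - a) + 2 * m * (1 + η) = η * (b - a) + 2 * m + 2 * (m * η) := by ring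
    linarith
  -- lower bound
  have hlower : -(η * (b - a) + 2 * m * (1 + η)) ≤ f b - f a - (b - a) := by
    rcases Nat.lt_or_ge v' u' with hlt | hge
    · -- degenerate case: b - a ≤ m
      have h1 : b / m < (v' : ℝ) + 1 := Nat.lt_floor_add_one (b / m)
      have h2 : (u' : ℝ) < a / m + 1 := Nat.ceil_lt_add_one ham
      have h3 : ((v') : ℝ) + 1 ≤ u' := by exact_mod_cast hlt
      have hba : b - a ≤ m := by
        have : b / m - a / m ≤ 1 := by linarith
        have hb' : b / m - a / m = (b - a) / m := by ring
        rw [hb'] at this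
        nlinarith [(div_le_one hm).mp this]
      have hfab : f a ≤ f b := hf hab
      have h4 : 0 ≤ η * (b - a) := mul_nonneg hη0 (by linarith)
      have h5 : 0 ≤ m * η := mul_nonneg hm.le hη0
      have hgoal : η * (b - a) + 2 * m * (1 + η) = η * (b - a) + 2 * m + 2 * (m * η) := by ring
      linarith
    · -- main case
      have hu'a : a ≤ (u' : ℝ) * m := by
        have := Nat.le_ceil (a / m)
        calc a = (a / m) * m := (div_mul_cancel₀ a hm.ne').symm
          _ ≤ (u' : ℝ) * m := by nlinarith
      have hv'b : (v' : ℝ) * m ≤ b := by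
        have := Nat.floor_le (le_trans ham habm)
        calc (v' : ℝ) * m ≤ (b / m) * m := by nlinarith
          _ = b := div_mul_cancel₀ b hm.ne'
      have hv'M : v' ≤ M := le_trans (Nat.le_succ v') hvM
      have htel := (abs_le.mp (tel v' hv'M u' hge)).1
      have hfa : f a ≤ f ((u' : ℝ) * m) := hf hu'a
      have hfb : f ((v' : ℝ) * m) ≤ f b := hf hv'b
      have hd0 : (0:ℝ) ≤ (v' : ℝ) - u' := by
        have : (u':ℝ) ≤ v' := by exact_mod_cast hge
        linarith
      have hdl : (b - a) - 2 * m ≤ ((v' : ℝ) - u') * m := by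
        have h1 : b / m - 1 < (v' : ℝ) := by
          have := Nat.lt_floor_add_one (b / m); linarith
        have h2 : (u' : ℝ) < a / m + 1 := Nat.ceil_lt_add_one ham
        have h3 : (b - a) / m - 2 ≤ (v' : ℝ) - u' := by
          have hb' : b / m - a / m = (b - a) / m := by ring
          linarith
        calc (b - a) - 2 * m = ((b - a) / m - 2) * m := by
              rw [sub_mul, div_mul_cancel₀ _ hm.ne']
          _ ≤ ((v' : ℝ) - u') * m := mul_le_mul_of_nonneg_right h3 hm.le
      have h1e : (0:ℝ) ≤ 1 - η := by linarith
      have hp := mul_le_mul_of_nonneg_left hdl h1e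
      have hq : (1 - η) * (((v' : ℝ) - u') * m)
          = ((v' : ℝ) - u') * m - η * (((v' : ℝ) - u') * m) := by ring
      have hr : (1 - η) * ((b - a) - 2 * m)
          = (b - a) - η * (b - a) - 2 * m + 2 * (m * η) := by ring
      have h5 : 0 ≤ m * η := mul_nonneg hm.le hη0
      have hgoal : η * (b - a) + 2 * m * (1 + η) = η * (b - a) + 2 * m + 2 * (m * η) := by ring
      linarith
  rw [abs_le]
  exact ⟨hlower, hupper⟩

lemma increment_dev {Ω : Type*} [MeasurableSpace Ω] (μ : Measure Ω) (N : ℝ → Ω → ℕ)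
    (hmeas : ∀ t : ℝ, Measurable (N t))
    (hmono : ∀ ω : Ω, ∀ s t : ℝ, s ≤ t → N s ω ≤ N t ω)
    (hlaw : ∀ s t : ℝ, 0 ≤ s → s ≤ t →
      Measure.map (fun ω => N t ω - N s ω) μ
        = ProbabilityTheory.poissonMeasure (Real.toNNReal (t - s)))
    (s t : ℝ) (hs : 0 ≤ s) (hst : s ≤ t) (η : ℝ) (hη0 : 0 < η) (hη1 : η ≤ 1) :
    μ {ω | η * (t - s) ≤ |((N t ω : ℝ) - (N s ω : ℝ)) - (t - s)|}
      ≤ 2 * ENNReal.ofReal (Real.exp (-((t - s) * η ^ 2 / 4))) := by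
  have hts : ((Real.toNNReal (t - s)) : ℝ) = t - s := Real.coe_toNNReal _ (by linarith)
  have hpre : {ω | η * (t - s) ≤ |((N t ω : ℝ) - (N s ω : ℝ)) - (t - s)|}
      = (fun ω => N t ω - N s ω) ⁻¹'
        {n : ℕ | η * ((Real.toNNReal (t - s)) : ℝ) ≤ |(n : ℝ) - ((Real.toNNReal (t - s)) : ℝ)|} := by
    ext ω
    simp only [Set.mem_setOf_eq, Set.mem_preimage, hts]
    rw [Nat.cast_sub (hmono ω s t hst)]
  rw [hpre, ← Measure.map_apply (f := fun ω => N t ω - N s ω) ((hmeas t).sub (hmeas s)) MeasurableSet.of_discrete,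
    hlaw s t hs hst]
  have h := poisson_dev (Real.toNNReal (t - s)) η hη0 hη1
  rw [hts] at h
  convert h using 3 <;> rw [hts]

set_option maxHeartbeats 2000000 in
lemma eventually_good {Ω : Type*} [MeasurableSpace Ω] (μ : Measure Ω)
    [IsProbabilityMeasure μ]
    (N : ℝ → Ω → ℕ)
    (hmeas : ∀ t : ℝ, Measurable (N t))
    (hmono : ∀ ω : Ω, ∀ s t : ℝ, s ≤ t → N s ω ≤ N t ω)
    (hlaw : ∀ s t : ℝ, 0 ≤ s → s ≤ t →
      Measure.map (fun ω => N t ω - N s ω) μ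
        = ProbabilityTheory.poissonMeasure (Real.toNNReal (t - s)))
    (T p : ℝ) (hT : 0 < T) (hp1 : 1 / 2 < p) (hp2 : p < 1)
    (ε0 : ℝ) (hε0 : 0 < ε0) (hε1 : ε0 ≤ 1) :
    ∀ᵐ ω ∂μ, ∃ R : ℕ, ∀ r : ℕ, R ≤ r →
      ∀ ξ ∈ Set.Icc (0 : ℝ) 1,
        ∀ t₀ ∈ Set.Icc (0 : ℝ) (T * (r : ℝ) ^ ((2 : ℝ) - p)),
          |((N (t₀ + ξ * (r : ℝ) ^ (2 * p - 1)) ω : ℝ) - (N t₀ ω : ℝ))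
              / (r : ℝ) ^ (2 * p - 1) - ξ| ≤ ε0 := by
  have hq : 0 < 2 * p - 1 := by linarith
  set q : ℝ := 2 * p - 1 with hq_def
  set η : ℝ := ε0 / 4 with hη_def
  set δ : ℝ := ε0 / 16 with hδ_def
  have hη0 : 0 < η := by positivity
  have hη1 : η ≤ 1 := by rw [hη_def]; linarith
  have hδ0 : 0 < δ := by positivity
  set L : ℕ → ℝ := fun r => (r : ℝ) ^ q with hL_def
  set m : ℕ → ℝ := fun r => δ * L r with hm_def
  set M : ℕ → ℕ := fun r => ⌈(T * (r : ℝ) ^ ((2 : ℝ) - p) + L r) / m r⌉₊ + 1 with hM_def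
  set B : ℕ → ℕ → Set Ω := fun r i =>
    {ω | η * m r ≤ |((N ((i + 1) * m r) ω : ℝ) - (N (i * m r) ω : ℝ)) - m r|} with hB_def
  set A : ℕ → Set Ω := fun r => ⋃ i ∈ Finset.range (M r), B r i with hA_def
  -- positivity facts for r ≥ 1
  have hL_pos : ∀ r : ℕ, 1 ≤ r → 0 < L r := fun r hr =>
    Real.rpow_pos_of_pos (by exact_mod_cast hr : (0:ℝ) < r) q
  have hm_pos : ∀ r : ℕ, 1 ≤ r → 0 < m r := fun r hr => mul_pos hδ0 (hL_pos r hr)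
  -- measure of each B
  have hB_le : ∀ r : ℕ, 1 ≤ r → ∀ i : ℕ,
      μ (B r i) ≤ 2 * ENNReal.ofReal (Real.exp (-(m r * η ^ 2 / 4))) := by
    intro r hr i
    have hmr := (hm_pos r hr).le
    have hs : (0:ℝ) ≤ i * m r := mul_nonneg (Nat.cast_nonneg i) hmr
    have hst : (i:ℝ) * m r ≤ ((i:ℝ) + 1) * m r := by nlinarith
    have h := increment_dev μ N hmeas hmono hlaw ((i:ℝ) * m r) (((i:ℝ) + 1) * m r) hs hst
      η hη0 hη1
    rw [show ((i:ℝ) + 1) * m r - (i:ℝ) * m r = m r by ring] at h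
    exact h
  have hA_le : ∀ r : ℕ, 1 ≤ r →
      μ (A r) ≤ (M r) * (2 * ENNReal.ofReal (Real.exp (-(m r * η ^ 2 / 4)))) := by
    intro r hr
    calc μ (A r) ≤ ∑ i ∈ Finset.range (M r), μ (B r i) := measure_biUnion_finset_le _ _
      _ ≤ ∑ _i ∈ Finset.range (M r),
          (2 * ENNReal.ofReal (Real.exp (-(m r * η ^ 2 / 4)))) :=
        Finset.sum_le_sum (fun i _ => hB_le r hr i)
      _ = (M r) * (2 * ENNReal.ofReal (Real.exp (-(m r * η ^ 2 / 4)))) := by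
        rw [Finset.sum_const, Finset.card_range, nsmul_eq_mul]
  -- summability
  have hsum : ∑' r, μ (A r) ≠ ∞ := by
    set c : ℝ := δ * η ^ 2 / 4 with hc_def
    have hc : 0 < c := by positivity
    set k0 : ℕ := ⌈(4 : ℝ) / q⌉₊ with hk0_def
    have hk04 : (4 : ℝ) ≤ q * k0 := by
      have h1 : (4 : ℝ) / q ≤ k0 := Nat.le_ceil _
      calc (4:ℝ) = ((4:ℝ)/q) * q := by field_simp
        _ ≤ (k0 : ℝ) * q := mul_le_mul_of_nonneg_right h1 hq.le
        _ = q * k0 := by ring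
    set D : ℝ := (k0.factorial : ℝ) / c ^ k0 with hD_def
    have hD : 0 < D := by positivity
    set C₁ : ℝ := T / δ + 1 / δ + 2 with hC₁_def
    have hC₁ : 0 < C₁ := by positivity
    set K : ℝ := C₁ * (2 * D) with hK_def
    have hK : 0 < K := by positivity
    set g : ℕ → ℝ := fun r => K * (((r : ℝ) ^ (2 : ℕ))⁻¹) with hg_def
    have hg_nonneg : ∀ r, 0 ≤ g r := fun r => by positivity
    have hAg : ∀ r : ℕ, 1 ≤ r → μ (A r) ≤ ENNReal.ofReal (g r) := by
      intro r hr
      have hrpos : (0:ℝ) < r := by exact_mod_cast hr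
      have hrr1 : (1:ℝ) ≤ r := by exact_mod_cast hr
      have hLpos : 0 < L r := hL_pos r hr
      have hmpos : 0 < m r := hm_pos r hr
      have hr2_one : (1:ℝ) ≤ (r:ℝ) ^ ((2:ℝ)) := by
        calc (1:ℝ) = (r:ℝ) ^ ((0:ℝ)) := (Real.rpow_zero _).symm
          _ ≤ (r:ℝ) ^ ((2:ℝ)) := Real.rpow_le_rpow_of_exponent_le hrr1 (by norm_num)
      have hr2_pos : (0:ℝ) < (r:ℝ) ^ ((2:ℝ)) := Real.rpow_pos_of_pos hrpos _
      have hr4_pos : (0:ℝ) < (r:ℝ) ^ ((4:ℝ)) := Real.rpow_pos_of_pos hrpos _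
      -- exp bound
      have hmc : m r * η ^ 2 / 4 = c * L r := by
        simp only [hm_def, hc_def]; ring
      have hexp : Real.exp (-(m r * η ^ 2 / 4))
          ≤ (k0.factorial : ℝ) / (c ^ k0 * (r:ℝ) ^ ((4:ℝ))) := by
        rw [hmc]
        have hcl : 0 < c * L r := mul_pos hc hLpos
        have hpf := Real.pow_div_factorial_le_exp (c * L r) hcl.le k0
        have hppos : 0 < (c * L r) ^ k0 / (k0.factorial : ℝ) := by positivity
        have h1 : Real.exp (-(c * L r)) ≤ (k0.factorial : ℝ) / (c * L r) ^ k0 := by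
          rw [Real.exp_neg]
          calc (Real.exp (c * L r))⁻¹ ≤ ((c * L r) ^ k0 / (k0.factorial : ℝ))⁻¹ :=
              inv_anti₀ hppos hpf
            _ = (k0.factorial : ℝ) / (c * L r) ^ k0 := inv_div _ _
        refine h1.trans ?_
        have h2 : (c * L r) ^ k0 = c ^ k0 * (r:ℝ) ^ (q * k0) := by
          rw [mul_pow]
          congr 1
          simp only [hL_def]
          rw [← Real.rpow_natCast ((r:ℝ) ^ q) k0, ← Real.rpow_mul hrpos.le]
        rw [h2]
        apply div_le_div_of_nonneg_left (by positivity) (by positivity)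
        have h3 : (r:ℝ) ^ ((4:ℝ)) ≤ (r:ℝ) ^ (q * k0) :=
          Real.rpow_le_rpow_of_exponent_le hrr1 hk04
        have hck : (0:ℝ) < c ^ k0 := by positivity
        exact mul_le_mul_of_nonneg_left h3 hck.le
      -- bound on M r
      have hM : (M r : ℝ) ≤ C₁ * (r:ℝ) ^ ((2:ℝ)) := by
        have hnum : (0:ℝ) ≤ T * (r : ℝ) ^ ((2 : ℝ) - p) + L r :=
          add_nonneg (mul_nonneg hT.le (Real.rpow_nonneg hrpos.le _)) hLpos.le
        have hX0 : 0 ≤ (T * (r : ℝ) ^ ((2 : ℝ) - p) + L r) / m r :=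
          div_nonneg hnum hmpos.le
        have hceil : (⌈(T * (r : ℝ) ^ ((2 : ℝ) - p) + L r) / m r⌉₊ : ℝ)
            < (T * (r : ℝ) ^ ((2 : ℝ) - p) + L r) / m r + 1 := Nat.ceil_lt_add_one hX0
        have hM_cast : (M r : ℝ)
            = (⌈(T * (r : ℝ) ^ ((2 : ℝ) - p) + L r) / m r⌉₊ : ℝ) + 1 := by
          simp [hM_def]
        have h1 : (r:ℝ) ^ ((2:ℝ) - p) = (r:ℝ) ^ ((3:ℝ) - 3 * p) * (r:ℝ) ^ q := by
          rw [← Real.rpow_add hrpos]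
          congr 1
          rw [hq_def]; ring
        have hXeq : (T * (r : ℝ) ^ ((2 : ℝ) - p) + L r) / m r
            = (T / δ) * (r:ℝ) ^ ((3:ℝ) - 3 * p) + 1 / δ := by
          simp only [hm_def, hL_def]
          rw [h1]
          field_simp
        have h3p : (r:ℝ) ^ ((3:ℝ) - 3 * p) ≤ (r:ℝ) ^ ((2:ℝ)) :=
          Real.rpow_le_rpow_of_exponent_le hrr1 (by linarith)
        have hA1 : (T / δ) * (r:ℝ) ^ ((3:ℝ) - 3 * p) ≤ (T / δ) * (r:ℝ) ^ ((2:ℝ)) :=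
          mul_le_mul_of_nonneg_left h3p (by positivity)
        have hA2 : 1 / δ ≤ (1 / δ) * (r:ℝ) ^ ((2:ℝ)) :=
          le_mul_of_one_le_right (by positivity) hr2_one
        have hA3 : (2:ℝ) ≤ 2 * (r:ℝ) ^ ((2:ℝ)) := by linarith
        have hC1exp : C₁ * (r:ℝ) ^ ((2:ℝ))
            = (T / δ) * (r:ℝ) ^ ((2:ℝ)) + (1 / δ) * (r:ℝ) ^ ((2:ℝ))
              + 2 * (r:ℝ) ^ ((2:ℝ)) := by
          rw [hC₁_def]; ring
        rw [hM_cast, hXeq]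
        rw [hXeq] at hceil
        linarith
      -- combine
      have hcomb : (M r : ℝ) * (2 * Real.exp (-(m r * η ^ 2 / 4))) ≤ g r := by
        have he_nonneg : 0 ≤ Real.exp (-(m r * η ^ 2 / 4)) := Real.exp_nonneg _
        have hprod : (M r : ℝ) * (2 * Real.exp (-(m r * η ^ 2 / 4)))
            ≤ (C₁ * (r:ℝ) ^ ((2:ℝ))) * (2 * ((k0.factorial : ℝ) / (c ^ k0 * (r:ℝ) ^ ((4:ℝ))))) := by
          apply mul_le_mul hM (by linarith) (by positivity) (by positivity)
        refine hprod.trans ?_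
        have h44 : (r:ℝ) ^ ((4:ℝ)) = (r:ℝ) ^ ((2:ℝ)) * (r:ℝ) ^ ((2:ℝ)) := by
          rw [← Real.rpow_add hrpos]; norm_num
        have h2n : ((r : ℝ) ^ (2 : ℕ)) = (r:ℝ) ^ ((2:ℝ)) := by
          rw [← Real.rpow_natCast (r:ℝ) 2]; norm_num
        have hck : c ^ k0 ≠ 0 := by positivity
        have hR2 : (r:ℝ) ^ ((2:ℝ)) ≠ 0 := hr2_pos.ne'
        have heq : (C₁ * (r:ℝ) ^ ((2:ℝ)))
            * (2 * ((k0.factorial : ℝ) / (c ^ k0 * (r:ℝ) ^ ((4:ℝ))))) = g r := by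
          simp only [hg_def, hK_def, hD_def, h2n]
          rw [h44]
          field_simp
        rw [heq]
      calc μ (A r) ≤ (M r) * (2 * ENNReal.ofReal (Real.exp (-(m r * η ^ 2 / 4)))) :=
          hA_le r hr
        _ = ENNReal.ofReal ((M r : ℝ) * (2 * Real.exp (-(m r * η ^ 2 / 4)))) := by
          rw [ENNReal.ofReal_mul (Nat.cast_nonneg _), ENNReal.ofReal_mul (by norm_num)]
          simp [ENNReal.ofReal_natCast]
        _ ≤ ENNReal.ofReal (g r) := ENNReal.ofReal_le_ofReal hcomb
    have hg_sum : Summable g := by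
      apply Summable.mul_left
      exact Real.summable_nat_pow_inv.mpr (by norm_num)
    set g' : ℕ → ℝ := fun r => if r = 0 then 1 else g r with hg'_def
    have hg'_nonneg : ∀ r, 0 ≤ g' r := by
      intro r
      simp only [hg'_def]
      split
      · norm_num
      · exact hg_nonneg r
    have hAg' : ∀ r : ℕ, μ (A r) ≤ ENNReal.ofReal (g' r) := by
      intro r
      rcases Nat.eq_zero_or_pos r with h0 | hpos
      · subst h0
        simp only [hg'_def, if_pos rfl, ENNReal.ofReal_one]
        exact prob_le_one
      · have := hAg r hpos
        simpa only [hg'_def, if_neg (Nat.pos_iff_ne_zero.mp hpos)] using this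
    have hg'_sum : Summable g' := by
      rw [← summable_nat_add_iff 1]
      refine ((summable_nat_add_iff 1).mpr hg_sum).congr (fun n => ?_)
      simp [hg'_def]
    have hle : ∑' r, μ (A r) ≤ ENNReal.ofReal (∑' r, g' r) := by
      calc ∑' r, μ (A r) ≤ ∑' r, ENNReal.ofReal (g' r) := ENNReal.tsum_le_tsum hAg'
        _ = ENNReal.ofReal (∑' r, g' r) :=
          (ENNReal.ofReal_tsum_of_nonneg hg'_nonneg hg'_sum).symm
    exact ne_top_of_le_ne_top ENNReal.ofReal_ne_top hle
  -- Borel-Cantelli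
  have hBC : ∀ᵐ ω ∂μ, ∃ R : ℕ, ∀ r : ℕ, R ≤ r → ω ∉ A r := by
    have h0 := MeasureTheory.measure_limsup_atTop_eq_zero (μ := μ) (s := A) hsum
    have h1 : ∀ᵐ ω ∂μ, ω ∉ Filter.limsup A Filter.atTop := by
      rw [MeasureTheory.ae_iff]
      simpa using h0
    filter_upwards [h1] with ω hω
    rw [Filter.mem_limsup_iff_frequently_mem, Filter.not_frequently] at hω
    obtain ⟨R, hR⟩ := Filter.eventually_atTop.mp hω
    exact ⟨R, fun r hr => hR r hr⟩
  filter_upwards [hBC] with ω hω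
  obtain ⟨R, hR⟩ := hω
  refine ⟨max R 1, fun r hr ξ hξ t₀ ht₀ => ?_⟩
  have hr1 : 1 ≤ r := le_trans (le_max_right R 1) hr
  have hrR : R ≤ r := le_trans (le_max_left R 1) hr
  have hAr : ω ∉ A r := hR r hrR
  obtain ⟨hξ0, hξ1⟩ := hξ
  obtain ⟨ht0, ht1⟩ := ht₀
  have hLpos : 0 < L r := hL_pos r hr1
  have hmpos : 0 < m r := hm_pos r hr1
  have hmr_eq : m r = δ * L r := rfl
  have hgrid : ∀ i < M r,
      |((fun x => ((N x ω : ℕ) : ℝ)) ((i + 1) * m r))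
        - ((fun x => ((N x ω : ℕ) : ℝ)) ((i : ℝ) * m r)) - m r| ≤ η * m r := by
    intro i hi
    by_contra hcon
    push_neg at hcon
    exact hAr (Set.mem_biUnion (Finset.mem_range.mpr hi) (le_of_lt hcon))
  have hf : Monotone (fun x => ((N x ω : ℕ) : ℝ)) :=
    fun x y hxy => Nat.cast_le.mpr (hmono ω x y hxy)
  have hab : t₀ ≤ t₀ + ξ * L r := by nlinarith
  have hbM : t₀ + ξ * L r + m r ≤ (M r : ℝ) * m r := by
    have hX := Nat.le_ceil ((T * (r : ℝ) ^ ((2 : ℝ) - p) + L r) / m r)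
    have hX2 : T * (r : ℝ) ^ ((2 : ℝ) - p) + L r
        ≤ (⌈(T * (r : ℝ) ^ ((2 : ℝ) - p) + L r) / m r⌉₊ : ℝ) * m r := by
      calc T * (r : ℝ) ^ ((2 : ℝ) - p) + L r
          = ((T * (r : ℝ) ^ ((2 : ℝ) - p) + L r) / m r) * m r :=
            (div_mul_cancel₀ _ hmpos.ne').symm
        _ ≤ _ := mul_le_mul_of_nonneg_right hX hmpos.le
    have hM_eq : (M r : ℝ) = (⌈(T * (r : ℝ) ^ ((2 : ℝ) - p) + L r) / m r⌉₊ : ℝ) + 1 := by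
      simp [hM_def]
    have hbub : t₀ + ξ * L r ≤ T * (r : ℝ) ^ ((2 : ℝ) - p) + L r := by nlinarith
    rw [hM_eq]
    nlinarith
  have hdet := det_approx hf hmpos hη0.le hη1 hgrid ht0 hab hbM
  have hba : t₀ + ξ * L r - t₀ = ξ * L r := by ring
  rw [hba] at hdet
  have hcoef : η * ξ + 2 * δ * (1 + η) ≤ ε0 := by
    rw [hη_def, hδ_def]
    nlinarith
  have key : |((N (t₀ + ξ * L r) ω : ℝ) - (N t₀ ω : ℝ)) / L r - ξ| ≤ ε0 := by
    have h2 : ((N (t₀ + ξ * L r) ω : ℝ) - (N t₀ ω : ℝ)) / L r - ξ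
        = (((N (t₀ + ξ * L r) ω : ℝ) - (N t₀ ω : ℝ)) - ξ * L r) / L r := by
      field_simp
    rw [h2, abs_div, abs_of_pos hLpos, div_le_iff₀ hLpos]
    calc |((N (t₀ + ξ * L r) ω : ℝ) - (N t₀ ω : ℝ)) - ξ * L r|
        ≤ η * (ξ * L r) + 2 * m r * (1 + η) := hdet
      _ = (η * ξ + 2 * δ * (1 + η)) * L r := by rw [hmr_eq]; ring
      _ ≤ ε0 * L r := mul_le_mul_of_nonneg_right hcoef hLpos.le
  exact key

/-- For a unit-rate Poisson process `N` (nondecreasing counting process with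
independent Poisson-distributed increments), with probability 1, the scaled
increments `(N(t₀ + ξ r^{2p-1}) - N(t₀))/r^{2p-1}` converge to `ξ`, uniformly
over `ξ ∈ [0,1]` and `t₀ ∈ [0, T r^{2-p}]`. -/
theorem stmt17 {Ω : Type*} [MeasurableSpace Ω] (μ : Measure Ω)
    [IsProbabilityMeasure μ]
    (N : ℝ → Ω → ℕ)
    (hmeas : ∀ t : ℝ, Measurable (N t))
    (hmono : ∀ ω : Ω, ∀ s t : ℝ, s ≤ t → N s ω ≤ N t ω)
    (hzero : ∀ ω : Ω, N 0 ω = 0)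
    (hlaw : ∀ s t : ℝ, 0 ≤ s → s ≤ t →
      Measure.map (fun ω => N t ω - N s ω) μ
        = ProbabilityTheory.poissonMeasure (Real.toNNReal (t - s)))
    (hindep : ∀ n : ℕ, ∀ ts : Fin (n + 1) → ℝ, Monotone ts → (∀ j, 0 ≤ ts j) →
      ProbabilityTheory.iIndepFun
        (fun j : Fin n => fun ω => N (ts j.succ) ω - N (ts j.castSucc) ω) μ)
    (T p : ℝ) (hT : 0 < T) (hp1 : 1 / 2 < p) (hp2 : p < 1) :
    ∀ᵐ ω ∂μ, ∀ ε > (0 : ℝ), ∃ R : ℕ, ∀ r : ℕ, R ≤ r →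
      ∀ ξ ∈ Set.Icc (0 : ℝ) 1,
        ∀ t₀ ∈ Set.Icc (0 : ℝ) (T * (r : ℝ) ^ ((2 : ℝ) - p)),
          |((N (t₀ + ξ * (r : ℝ) ^ (2 * p - 1)) ω : ℝ) - (N t₀ ω : ℝ))
              / (r : ℝ) ^ (2 * p - 1) - ξ| < ε := by
  have hae : ∀ᵐ ω ∂μ, ∀ k : ℕ, ∃ R : ℕ, ∀ r : ℕ, R ≤ r →
      ∀ ξ ∈ Set.Icc (0 : ℝ) 1,
        ∀ t₀ ∈ Set.Icc (0 : ℝ) (T * (r : ℝ) ^ ((2 : ℝ) - p)),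
          |((N (t₀ + ξ * (r : ℝ) ^ (2 * p - 1)) ω : ℝ) - (N t₀ ω : ℝ))
              / (r : ℝ) ^ (2 * p - 1) - ξ| ≤ 1 / ((k : ℝ) + 1) := by
    rw [MeasureTheory.ae_all_iff]
    intro k
    refine eventually_good μ N hmeas hmono hlaw T p hT hp1 hp2 (1 / ((k : ℝ) + 1))
      (by positivity) ?_
    rw [div_le_one (by positivity)]
    have : (0:ℝ) ≤ (k:ℝ) := Nat.cast_nonneg k
    linarith
  filter_upwards [hae] with ω hω
  intro ε hε
  obtain ⟨k, hk⟩ := exists_nat_one_div_lt hε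
  obtain ⟨R, hR⟩ := hω k
  exact ⟨R, fun r hr ξ hξ t₀ ht₀ => lt_of_le_of_lt (hR r hr ξ hξ t₀ ht₀) hk⟩
end
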